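/- arXiv:2401.09929 — 6 statements merged into one kernel-verified Lean document; each statement's English description precedes it below -/
import Mathlib

section
/- For every integer j ≥ 1 and n ≥ 1, the tail sum ∑_{k=n}^∞ a_k^{(j+1)} converges and equals -a_{n-1}^{(j)}, where a_n^{(j)} := (-1)^n * binom(j - 3/2, n). -/
open Finset Filter Topology

/-- `a j n = (-1)^n * C(j - 3/2, n)`, the n-th Taylor coefficient of `(1-s)^(j-3/2)`. -/
noncomputable def aSeq (j n : ℕ) : ℝ :=
  (-1 : ℝ) ^ n * (∏ i ∈ Finset.range n, ((j : ℝ) - 3 / 2 - i)) / (Nat.factorial n)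

lemma aSeq_rec (j m : ℕ) :
    aSeq j (m + 1) = aSeq j m * (((m : ℝ) + 3 / 2 - j) / (m + 1)) := by
  unfold aSeq
  rw [Finset.prod_range_succ, Nat.factorial_succ]
  have h1 : (Nat.factorial m : ℝ) ≠ 0 := by positivity
  push_cast
  field_simp
  ring

lemma aSeq_pascal (j m : ℕ) :
    aSeq (j + 1) (m + 1) = aSeq j (m + 1) - aSeq j m := by
  unfold aSeq
  push_cast
  rw [Finset.prod_range_succ' (fun i : ℕ => ((j : ℝ) + 1 - 3 / 2 - i)), Finset.prod_range_succ,
    Nat.factorial_succ]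
  have h1 : (Nat.factorial m : ℝ) ≠ 0 := by positivity
  have h2 : ∀ i ∈ Finset.range m,
      ((j : ℝ) + 1 - 3 / 2 - ((i : ℕ) + 1 : ℕ)) = ((j : ℝ) - 3 / 2 - i) := by
    intro i _; push_cast; ring
  rw [Finset.prod_congr rfl h2]
  push_cast
  field_simp
  ring

lemma s_base_nonneg (J : ℕ) : 0 ≤ (-1 : ℝ) ^ J * aSeq (J + 1) J := by
  unfold aSeq
  rw [← mul_div_assoc, ← mul_assoc, ← pow_add]
  rw [Even.neg_one_pow ⟨J, rfl⟩, one_mul]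
  apply div_nonneg _ (by positivity)
  apply Finset.prod_nonneg
  intro i hi
  rw [Finset.mem_range] at hi
  have : (i : ℝ) ≤ (J : ℝ) - 1 := by
    have : (i : ℝ) + 1 ≤ J := by exact_mod_cast hi
    linarith
  push_cast
  linarith

/-- `(-1)^J * aSeq (J+1) (J+k)`: the absolute value of the coefficients, suitably shifted. -/
noncomputable def tSeq (J k : ℕ) : ℝ := (-1 : ℝ) ^ J * aSeq (J + 1) (J + k)

lemma tSeq_rec (J k : ℕ) :
    tSeq J (k + 1) = tSeq J k * (((k : ℝ) + 1 / 2) / ((J : ℝ) + k + 1)) := by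
  unfold tSeq
  rw [show J + (k + 1) = (J + k) + 1 from rfl, aSeq_rec]
  push_cast
  ring_nf

lemma tSeq_nonneg (J k : ℕ) : 0 ≤ tSeq J k := by
  induction k with
  | zero => simpa [tSeq] using s_base_nonneg J
  | succ k ih =>
    rw [tSeq_rec]
    have h1 : (0:ℝ) ≤ ((k : ℝ) + 1 / 2) / ((J : ℝ) + k + 1) := by positivity
    exact mul_nonneg ih h1

lemma tSeq_antitone (J : ℕ) : Antitone (tSeq J) := by
  apply antitone_nat_of_succ_le
  intro k
  rw [tSeq_rec]
  have h1 : ((k : ℝ) + 1 / 2) / ((J : ℝ) + k + 1) ≤ 1 := by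
    rw [div_le_one (by positivity)]
    linarith
  calc tSeq J k * (((k : ℝ) + 1 / 2) / ((J : ℝ) + k + 1)) ≤ tSeq J k * 1 :=
        mul_le_mul_of_nonneg_left h1 (tSeq_nonneg J k)
    _ = tSeq J k := mul_one _

lemma tSeq_tendsto_zero (J : ℕ) : Tendsto (tSeq J) atTop (𝓝 0) := by
  have hbdd : BddBelow (Set.range (tSeq J)) :=
    ⟨0, by rintro x ⟨k, rfl⟩; exact tSeq_nonneg J k⟩
  have htend := tendsto_atTop_ciInf (tSeq_antitone J) hbdd
  set L := ⨅ k, tSeq J k with hL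
  have hL0 : 0 ≤ L := le_ciInf (tSeq_nonneg J)
  have hLle : ∀ k, L ≤ tSeq J k := fun k => ciInf_le hbdd k
  rcases eq_or_lt_of_le hL0 with h0 | hpos
  · rwa [← h0] at htend
  · exfalso
    have key : ∀ k : ℕ, L / (2 * ((J : ℝ) + 1)) * (1 / ((k : ℝ) + 1))
        ≤ tSeq J k - tSeq J (k + 1) := by
      intro k
      have hdiff : tSeq J k - tSeq J (k + 1)
          = tSeq J k * (((J : ℝ) + 1 / 2) / ((J : ℝ) + k + 1)) := by
        rw [tSeq_rec]
        field_simp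
        ring
      rw [hdiff]
      have hJ0 : (0:ℝ) ≤ (J:ℝ) := Nat.cast_nonneg J
      have hk0 : (0:ℝ) ≤ (k:ℝ) := Nat.cast_nonneg k
      have h1 : L / (2 * ((J : ℝ) + 1)) * (1 / ((k : ℝ) + 1))
          ≤ L * (((J : ℝ) + 1 / 2) / ((J : ℝ) + k + 1)) := by
        rw [div_mul_eq_mul_div, mul_one_div, div_div, ← mul_div_assoc,
          div_le_div_iff₀ (by positivity) (by positivity)]
        nlinarith [mul_nonneg (mul_nonneg hL0 (mul_nonneg hJ0 hJ0)) hk0,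
          mul_nonneg hL0 (mul_nonneg hJ0 hJ0), mul_nonneg hL0 (mul_nonneg hJ0 hk0),
          mul_nonneg hL0 hJ0]
      refine h1.trans ?_
      apply mul_le_mul_of_nonneg_right (hLle k) (by positivity)
    have hbound : ∀ N : ℕ, L / (2 * ((J : ℝ) + 1)) * (∑ k ∈ Finset.range N, (1 : ℝ) / (k + 1))
        ≤ tSeq J 0 := by
      intro N
      rw [Finset.mul_sum]
      calc ∑ k ∈ Finset.range N, L / (2 * ((J : ℝ) + 1)) * (1 / ((k : ℝ) + 1))
          ≤ ∑ k ∈ Finset.range N, (tSeq J k - tSeq J (k + 1)) :=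
            Finset.sum_le_sum fun k _ => key k
        _ = tSeq J 0 - tSeq J N := Finset.sum_range_sub' (tSeq J) N
        _ ≤ tSeq J 0 := by linarith [tSeq_nonneg J N]
    have hdiv : Tendsto (fun N : ℕ => L / (2 * ((J : ℝ) + 1)) *
        ∑ k ∈ Finset.range N, (1 : ℝ) / (k + 1)) atTop atTop := by
      apply Tendsto.const_mul_atTop (by positivity)
      exact_mod_cast Real.tendsto_sum_range_one_div_nat_succ_atTop
    obtain ⟨N, hN⟩ := (hdiv.eventually_gt_atTop (tSeq J 0)).exists
    exact absurd (hbound N) (not_le.mpr hN)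

lemma aSeq_of_tSeq (J m : ℕ) : aSeq (J + 1) (J + m) = (-1 : ℝ) ^ J * tSeq J m := by
  unfold tSeq
  rw [← mul_assoc, ← pow_add, Even.neg_one_pow ⟨J, rfl⟩, one_mul]

lemma aSeq_tendsto_zero (J : ℕ) : Tendsto (fun m => aSeq (J + 1) m) atTop (𝓝 0) := by
  rw [← tendsto_add_atTop_iff_nat J]
  have h : (fun m => aSeq (J + 1) (m + J)) = fun m => (-1 : ℝ) ^ J * tSeq J m := by
    funext m
    rw [show m + J = J + m from Nat.add_comm m J, aSeq_of_tSeq]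
  rw [h]
  simpa using (tSeq_tendsto_zero J).const_mul ((-1 : ℝ) ^ J)

/-- The tail sum `∑_{k=n}^∞ a_k^{(j+1)}` converges and equals `-a_{n-1}^{(j)}`. -/
theorem stmt_1 (j n : ℕ) (hj : 1 ≤ j) (hn : 1 ≤ n) :
    HasSum (fun k : ℕ => aSeq (j + 1) (n + k)) (-(aSeq j (n - 1))) := by
  obtain ⟨J, rfl⟩ := Nat.exists_eq_add_of_le' hj
  obtain ⟨N, rfl⟩ := Nat.exists_eq_add_of_le' hn
  rw [Nat.add_sub_cancel]
  set g : ℕ → ℝ := fun k => aSeq (J + 1) (N + k) with hg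
  have hfg : ∀ k : ℕ, aSeq (J + 1 + 1) (N + 1 + k) = g (k + 1) - g k := by
    intro k
    rw [show N + 1 + k = (N + k) + 1 from by omega, aSeq_pascal]
    simp only [hg]
    rw [show N + (k + 1) = N + k + 1 from rfl]
  have hu : ∀ m : ℕ, g (J + m) = (-1 : ℝ) ^ J * tSeq J (N + m) := by
    intro m
    simp only [hg]
    rw [show N + (J + m) = J + (N + m) from by omega, aSeq_of_tSeq]
  -- summability of norms
  have hnorm : Summable fun k : ℕ => ‖aSeq (J + 1 + 1) (N + 1 + k)‖ := by
    apply (summable_nat_add_iff J).1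
    have habs : ∀ k : ℕ, ‖aSeq (J + 1 + 1) (N + 1 + (k + J))‖
        = tSeq J (N + k) - tSeq J (N + k + 1) := by
      intro k
      rw [hfg (k + J)]
      have e1 : g (k + J + 1) - g (k + J)
          = (-1 : ℝ) ^ J * (tSeq J (N + (k + 1)) - tSeq J (N + k)) := by
        rw [show k + J + 1 = J + (k + 1) from by omega, show k + J = J + k from by omega,
          hu, hu]
        ring
      rw [e1, norm_mul, norm_pow, norm_neg, norm_one, one_pow, one_mul,
        Real.norm_eq_abs, abs_sub_comm,
        show N + (k + 1) = N + k + 1 from rfl,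
        abs_of_nonneg (sub_nonneg.mpr (tSeq_antitone J (Nat.le_succ (N + k))))]
    simp only [habs]
    apply summable_of_sum_range_le
      (c := tSeq J N)
      (fun k => sub_nonneg.mpr (tSeq_antitone J (Nat.le_succ (N + k))))
    intro M
    rw [show (∑ k ∈ Finset.range M, (tSeq J (N + k) - tSeq J (N + k + 1)))
        = tSeq J (N + 0) - tSeq J (N + M) from Finset.sum_range_sub' (fun k => tSeq J (N + k)) M]
    have := tSeq_nonneg J (N + M)
    simpa using by linarith
  rw [hasSum_iff_tendsto_nat_of_summable_norm hnorm]
  have hsum : ∀ M : ℕ, ∑ k ∈ Finset.range M, aSeq (J + 1 + 1) (N + 1 + k) = g M - g 0 := by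
    intro M
    calc ∑ k ∈ Finset.range M, aSeq (J + 1 + 1) (N + 1 + k)
        = ∑ k ∈ Finset.range M, (g (k + 1) - g k) := Finset.sum_congr rfl fun k _ => hfg k
      _ = g M - g 0 := Finset.sum_range_sub g M
  simp only [hsum]
  have hgt : Tendsto g atTop (𝓝 0) := by
    have h := (tendsto_add_atTop_iff_nat N).2 (aSeq_tendsto_zero J)
    have : (fun m => aSeq (J + 1) (m + N)) = g := by
      funext m; simp only [hg]; rw [Nat.add_comm m N]
    rwa [this] at h
  have := hgt.sub_const (g 0)
  simpa [hg] using this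
end

section
/- For every integer j ≥ 1 there exists a constant c_j such that for all n ≥ 2 and all 0 ≤ k ≤ n/2, |a_{n-k}^{(j)} - a_n^{(j)}| ≤ c_j * k / n^{j+1/2}, where a_n^{(j)} := (-1)^n * binom(j - 3/2, n). -/
lemma aSeq_succ (j m : ℕ) :
    aSeq j (m + 1) = aSeq j m * (((m : ℝ) + 3/2 - j) / (m + 1)) := by
  unfold aSeq
  rw [Finset.prod_range_succ, pow_succ, Nat.factorial_succ]
  have h1 : ((Nat.factorial m : ℝ)) ≠ 0 := by positivity
  have h2 : ((m : ℝ) + 1) ≠ 0 := by positivity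
  push_cast
  field_simp
  ring

lemma aSeq_shift (j m : ℕ) :
    aSeq (j + 1) (m + 1) = -(((j : ℝ) - 1/2) / (m + 1)) * aSeq j m := by
  unfold aSeq
  rw [Finset.prod_range_succ', pow_succ, Nat.factorial_succ]
  have hp : ∏ i ∈ Finset.range m, (((j + 1 : ℕ) : ℝ) - 3/2 - ((i + 1 : ℕ) : ℝ))
      = ∏ i ∈ Finset.range m, ((j : ℝ) - 3/2 - i) :=
    Finset.prod_congr rfl (fun i _ => by push_cast; ring)
  rw [hp]
  have h1 : ((Nat.factorial m : ℝ)) ≠ 0 := by positivity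
  have h2 : ((m : ℝ) + 1) ≠ 0 := by positivity
  push_cast
  field_simp
  ring

lemma aSeq_one_sq (m : ℕ) : (aSeq 1 m) ^ 2 * (2 * (m : ℝ) + 1) ≤ 1 := by
  induction m with
  | zero => simp [aSeq]
  | succ m ih =>
      have h := aSeq_succ 1 m
      have hm : (0 : ℝ) ≤ (m : ℝ) := Nat.cast_nonneg m
      have ha : (0 : ℝ) ≤ (aSeq 1 m) ^ 2 := sq_nonneg _
      rw [h]
      push_cast
      have key : ((m : ℝ) + 3/2 - 1) ^ 2 * (2 * (m + 1) + 1) ≤ ((m : ℝ) + 1) ^ 2 * (2 * m + 1) := by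
        nlinarith
      have hne : ((m : ℝ) + 1) ≠ 0 := by positivity
      calc (aSeq 1 m * (((m : ℝ) + 3/2 - 1) / (m + 1))) ^ 2 * (2 * ((m : ℝ) + 1) + 1)
          = (aSeq 1 m) ^ 2 * (((m : ℝ) + 3/2 - 1) ^ 2 * (2 * ((m : ℝ) + 1) + 1)) / ((m : ℝ) + 1) ^ 2 := by
            field_simp
        _ ≤ (aSeq 1 m) ^ 2 * (((m : ℝ) + 1) ^ 2 * (2 * m + 1)) / ((m : ℝ) + 1) ^ 2 := by
            exact (div_le_div_iff_of_pos_right (by positivity)).mpr (mul_le_mul_of_nonneg_left key ha)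
        _ = (aSeq 1 m) ^ 2 * (2 * m + 1) := by field_simp
        _ ≤ 1 := ih

lemma aSeq_core (j : ℕ) (hj : 1 ≤ j) :
    ∃ C : ℝ, 0 ≤ C ∧ ∀ m : ℕ, 1 ≤ m → (aSeq j m) ^ 2 * (m : ℝ) ^ (2 * j - 1) ≤ C := by
  induction j, hj using Nat.le_induction with
  | base =>
      refine ⟨1, zero_le_one, fun m hm => ?_⟩
      have h1 := aSeq_one_sq m
      have hm' : (m : ℝ) ^ (2 * 1 - 1) ≤ 2 * (m : ℝ) + 1 := by
        norm_num
        nlinarith [Nat.cast_nonneg (α := ℝ) m]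
      calc (aSeq 1 m) ^ 2 * (m : ℝ) ^ (2 * 1 - 1)
          ≤ (aSeq 1 m) ^ 2 * (2 * (m : ℝ) + 1) :=
            mul_le_mul_of_nonneg_left hm' (sq_nonneg _)
        _ ≤ 1 := h1
  | succ j hj ih =>
      obtain ⟨C, hC0, hC⟩ := ih
      refine ⟨max ((aSeq (j + 1) 1) ^ 2) (((j : ℝ) - 1/2) ^ 2 * 2 ^ (2 * j - 1) * C),
        le_max_of_le_left (sq_nonneg _), fun m hm => ?_⟩
      match m, hm with
      | 1, _ =>
          simpa using le_max_left _ _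
      | (m' + 2), _ =>
          set m : ℕ := m' + 1 with hm'def
          have hm1 : 1 ≤ m := Nat.le_add_left 1 m'
          have hmr : (1 : ℝ) ≤ (m : ℝ) := by exact_mod_cast hm1
          have hshift := aSeq_shift j m
          have hexp : 2 * (j + 1) - 1 = (2 * j - 1) + 2 := by omega
          have hpos : (0 : ℝ) < (m : ℝ) + 1 := by positivity
          have step1 : (aSeq (j + 1) (m + 1)) ^ 2 * ((m : ℝ) + 1) ^ (2 * (j + 1) - 1)
              = ((j : ℝ) - 1/2) ^ 2 * ((aSeq j m) ^ 2 * ((m : ℝ) + 1) ^ (2 * j - 1)) := by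
            rw [hshift, hexp, pow_add]
            field_simp
          have hle : ((m : ℝ) + 1) ^ (2 * j - 1) ≤ 2 ^ (2 * j - 1) * (m : ℝ) ^ (2 * j - 1) := by
            rw [← mul_pow]
            exact pow_le_pow_left₀ (by positivity) (by linarith) _
          have : (aSeq (j + 1) (m + 1)) ^ 2 * ((m : ℝ) + 1) ^ (2 * (j + 1) - 1)
              ≤ ((j : ℝ) - 1/2) ^ 2 * 2 ^ (2 * j - 1) * C := by
            rw [step1]
            have h2 : (aSeq j m) ^ 2 * ((m : ℝ) + 1) ^ (2 * j - 1)
                ≤ 2 ^ (2 * j - 1) * ((aSeq j m) ^ 2 * (m : ℝ) ^ (2 * j - 1)) := by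
              calc (aSeq j m) ^ 2 * ((m : ℝ) + 1) ^ (2 * j - 1)
                  ≤ (aSeq j m) ^ 2 * (2 ^ (2 * j - 1) * (m : ℝ) ^ (2 * j - 1)) :=
                    mul_le_mul_of_nonneg_left hle (sq_nonneg _)
                _ = 2 ^ (2 * j - 1) * ((aSeq j m) ^ 2 * (m : ℝ) ^ (2 * j - 1)) := by ring
            calc ((j : ℝ) - 1/2) ^ 2 * ((aSeq j m) ^ 2 * ((m : ℝ) + 1) ^ (2 * j - 1))
                ≤ ((j : ℝ) - 1/2) ^ 2 * (2 ^ (2 * j - 1) * ((aSeq j m) ^ 2 * (m : ℝ) ^ (2 * j - 1))) :=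
                  mul_le_mul_of_nonneg_left h2 (sq_nonneg _)
              _ ≤ ((j : ℝ) - 1/2) ^ 2 * (2 ^ (2 * j - 1) * C) := by
                  apply mul_le_mul_of_nonneg_left _ (sq_nonneg _)
                  exact mul_le_mul_of_nonneg_left (hC m hm1) (by positivity)
              _ = ((j : ℝ) - 1/2) ^ 2 * 2 ^ (2 * j - 1) * C := by ring
          have hcast : ((m' + 2 : ℕ) : ℝ) = (m : ℝ) + 1 := by push_cast [hm'def]; ring
          calc (aSeq (j + 1) (m' + 2)) ^ 2 * ((m' + 2 : ℕ) : ℝ) ^ (2 * (j + 1) - 1)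
              = (aSeq (j + 1) (m + 1)) ^ 2 * ((m : ℝ) + 1) ^ (2 * (j + 1) - 1) := by
                rw [hcast]
            _ ≤ ((j : ℝ) - 1/2) ^ 2 * 2 ^ (2 * j - 1) * C := this
            _ ≤ max ((aSeq (j + 1) 1) ^ 2) (((j : ℝ) - 1/2) ^ 2 * 2 ^ (2 * j - 1) * C) :=
                le_max_right _ _

lemma aSeq_diff (j : ℕ) (hj : 1 ≤ j) :
    ∃ D : ℝ, 0 ≤ D ∧ ∀ m : ℕ, 1 ≤ m →
      |aSeq j (m + 1) - aSeq j m| ≤ D / (m : ℝ) ^ ((j : ℝ) + 1/2) := by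
  obtain ⟨C, hC0, hC⟩ := aSeq_core j hj
  refine ⟨Real.sqrt (((j : ℝ) - 1/2) ^ 2 * C), Real.sqrt_nonneg _, fun m hm => ?_⟩
  set D := Real.sqrt (((j : ℝ) - 1/2) ^ 2 * C) with hD
  have hD2 : D ^ 2 = ((j : ℝ) - 1/2) ^ 2 * C := Real.sq_sqrt (by positivity)
  have hmr : (1 : ℝ) ≤ (m : ℝ) := by exact_mod_cast hm
  have hmpos : (0 : ℝ) < (m : ℝ) := by linarith
  have hdiff : aSeq j (m + 1) - aSeq j m = aSeq j m * ((1/2 - (j : ℝ)) / ((m : ℝ) + 1)) := by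
    rw [aSeq_succ]
    field_simp
    ring
  -- squared bound
  have hsq : (aSeq j (m + 1) - aSeq j m) ^ 2 * (m : ℝ) ^ (2 * j + 1) ≤ D ^ 2 := by
    rw [hdiff, hD2]
    have hexp : 2 * j + 1 = (2 * j - 1) + 2 := by omega
    rw [hexp, pow_add]
    have h1 : (0 : ℝ) < ((m : ℝ) + 1) ^ 2 := by positivity
    have hfrac : (m : ℝ) ^ 2 / ((m : ℝ) + 1) ^ 2 ≤ 1 := by
      rw [div_le_one h1]; nlinarith
    have key : (aSeq j m * ((1/2 - (j : ℝ)) / ((m : ℝ) + 1))) ^ 2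
        * ((m : ℝ) ^ (2 * j - 1) * (m : ℝ) ^ 2)
        = ((j : ℝ) - 1/2) ^ 2 * ((aSeq j m) ^ 2 * (m : ℝ) ^ (2 * j - 1))
          * ((m : ℝ) ^ 2 / ((m : ℝ) + 1) ^ 2) := by
      field_simp
      ring
    rw [key]
    calc ((j : ℝ) - 1/2) ^ 2 * ((aSeq j m) ^ 2 * (m : ℝ) ^ (2 * j - 1))
          * ((m : ℝ) ^ 2 / ((m : ℝ) + 1) ^ 2)
        ≤ ((j : ℝ) - 1/2) ^ 2 * ((aSeq j m) ^ 2 * (m : ℝ) ^ (2 * j - 1)) * 1 := by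
          apply mul_le_mul_of_nonneg_left hfrac
          positivity
      _ = ((j : ℝ) - 1/2) ^ 2 * ((aSeq j m) ^ 2 * (m : ℝ) ^ (2 * j - 1)) := mul_one _
      _ ≤ ((j : ℝ) - 1/2) ^ 2 * C :=
          mul_le_mul_of_nonneg_left (hC m hm) (sq_nonneg _)
  -- convert to rpow form
  have hrpow : ((m : ℝ) ^ ((j : ℝ) + 1/2)) ^ 2 = (m : ℝ) ^ (2 * j + 1) := by
    rw [← Real.rpow_natCast ((m : ℝ) ^ ((j : ℝ) + 1/2)) 2, ← Real.rpow_mul hmpos.le]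
    rw [show (((j : ℝ) + 1/2) * (2 : ℕ)) = ((2 * j + 1 : ℕ) : ℝ) by push_cast; ring]
    exact Real.rpow_natCast _ _
  have hppos : (0 : ℝ) < (m : ℝ) ^ ((j : ℝ) + 1/2) := Real.rpow_pos_of_pos hmpos _
  rw [le_div_iff₀ hppos]
  have hsq2 : (|aSeq j (m + 1) - aSeq j m| * (m : ℝ) ^ ((j : ℝ) + 1/2)) ^ 2 ≤ D ^ 2 := by
    rw [mul_pow, sq_abs, hrpow]
    exact hsq
  have h0 : 0 ≤ |aSeq j (m + 1) - aSeq j m| * (m : ℝ) ^ ((j : ℝ) + 1/2) := by positivity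
  exact (pow_le_pow_iff_left₀ h0 (Real.sqrt_nonneg _) two_ne_zero).mp hsq2

theorem stmt_2 (j : ℕ) (hj : 1 ≤ j) :
    ∃ c : ℝ, ∀ n : ℕ, 2 ≤ n → ∀ k : ℕ, (k : ℝ) ≤ (n : ℝ) / 2 →
      |aSeq j (n - k) - aSeq j n| ≤ c * (k : ℝ) / (n : ℝ) ^ ((j : ℝ) + 1 / 2) := by
  obtain ⟨D, hD0, hD⟩ := aSeq_diff j hj
  refine ⟨D * 2 ^ ((j : ℝ) + 1/2), fun n hn k hk => ?_⟩
  have hnr : (2 : ℝ) ≤ (n : ℝ) := by exact_mod_cast hn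
  have hnpos : (0 : ℝ) < (n : ℝ) := by linarith
  have h2k : 2 * k ≤ n := by
    have : ((2 * k : ℕ) : ℝ) ≤ (n : ℝ) := by push_cast; linarith
    exact_mod_cast this
  have hkn : k ≤ n := by omega
  have hnk1 : 1 ≤ n - k := by omega
  have hnkr : ((n - k : ℕ) : ℝ) = (n : ℝ) - (k : ℝ) := by
    exact Nat.cast_sub hkn
  have htel : aSeq j n - aSeq j (n - k)
      = ∑ m ∈ Finset.Ico (n - k) n, (aSeq j (m + 1) - aSeq j m) := by
    rw [Finset.sum_Ico_eq_sub _ (Nat.sub_le n k), Finset.sum_range_sub, Finset.sum_range_sub]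
    ring
  have habs : |aSeq j (n - k) - aSeq j n|
      = |∑ m ∈ Finset.Ico (n - k) n, (aSeq j (m + 1) - aSeq j m)| := by
    rw [← htel, abs_sub_comm]
  set e := (j : ℝ) + 1/2 with he
  have hepos : (0 : ℝ) < e := by
    have : (0 : ℝ) ≤ (j : ℝ) := Nat.cast_nonneg j
    rw [he]; linarith
  have hb : ∀ m ∈ Finset.Ico (n - k) n,
      |aSeq j (m + 1) - aSeq j m| ≤ D * 2 ^ e / (n : ℝ) ^ e := by
    intro m hm
    obtain ⟨hm1, hm2⟩ := Finset.mem_Ico.mp hm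
    have hm1' : 1 ≤ m := le_trans hnk1 hm1
    have hmhalf : (n : ℝ) / 2 ≤ (m : ℝ) := by
      have : ((n - k : ℕ) : ℝ) ≤ (m : ℝ) := by exact_mod_cast hm1
      rw [hnkr] at this
      linarith
    have hhalfpos : (0 : ℝ) < (n : ℝ) / 2 := by linarith
    calc |aSeq j (m + 1) - aSeq j m| ≤ D / (m : ℝ) ^ e := hD m hm1'
      _ ≤ D / ((n : ℝ) / 2) ^ e := by
          gcongr
      _ = D * 2 ^ e / (n : ℝ) ^ e := by
          rw [Real.div_rpow hnpos.le (by norm_num : (0:ℝ) ≤ 2)]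
          have h1 : (0 : ℝ) < (n : ℝ) ^ e := Real.rpow_pos_of_pos hnpos e
          have h2 : (0 : ℝ) < (2 : ℝ) ^ e := Real.rpow_pos_of_pos (by norm_num) e
          field_simp
  have hcard : (Finset.Ico (n - k) n).card = k := by
    rw [Nat.card_Ico]; omega
  calc |aSeq j (n - k) - aSeq j n|
      = |∑ m ∈ Finset.Ico (n - k) n, (aSeq j (m + 1) - aSeq j m)| := habs
    _ ≤ ∑ m ∈ Finset.Ico (n - k) n, |aSeq j (m + 1) - aSeq j m| :=
        Finset.abs_sum_le_sum_abs _ _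
    _ ≤ ∑ _m ∈ Finset.Ico (n - k) n, (D * 2 ^ e / (n : ℝ) ^ e) :=
        Finset.sum_le_sum hb
    _ = (k : ℝ) * (D * 2 ^ e / (n : ℝ) ^ e) := by
        rw [Finset.sum_const, hcard, nsmul_eq_mul]
    _ = D * 2 ^ e * (k : ℝ) / (n : ℝ) ^ e := by ring
end

section
/- Let a random walk S_n with i.i.d. integer-valued increments be left-continuous, i.e. P(X_1 ∈ {-1, 0, 1, 2, ...}) = 1. Then for all integers x ≥ 1 and n ≥ 1, P(τ_x = n) = (x/n) · P(S_n = -x), where τ_x = inf{n ≥ 1 : x + S_n ≤ 0}. -/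
namespace KempAux

open scoped Classical

/-- Partial sums. -/
def Sa (a : ℕ → ℤ) (m : ℕ) : ℤ := ∑ i ∈ Finset.range m, a i

lemma Sa_zero (a : ℕ → ℤ) : Sa a 0 = 0 := by simp [Sa]

lemma Sa_succ (a : ℕ → ℤ) (m : ℕ) : Sa a (m + 1) = Sa a m + a m :=
  Finset.sum_range_succ a m

/-- First-passage property for walk started at `x`, horizon `n`. -/
def FP (x : ℤ) (n : ℕ) (a : ℕ → ℤ) : Prop :=
  (∀ k : ℕ, 1 ≤ k → k < n → 0 < x + Sa a k) ∧ x + Sa a n ≤ 0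

lemma FP_sum {x : ℤ} {n : ℕ} {a : ℕ → ℤ} (ha : ∀ m, -1 ≤ a m) (hx : 1 ≤ x)
    (hn : 1 ≤ n) (h : FP x n a) : Sa a n = -x := by
  obtain ⟨m, rfl⟩ : ∃ m, n = m + 1 := ⟨n - 1, by omega⟩
  have h2 := h.2
  rw [Sa_succ] at h2 ⊢
  have ham := ha m
  rcases Nat.eq_zero_or_pos m with hm | hm
  · subst hm; rw [Sa_zero] at h2 ⊢; omega
  · have h1 := h.1 m hm (by omega)
    omega

lemma Sa_add {x : ℤ} {n : ℕ} {a : ℕ → ℤ} (hper : ∀ m, a (m + n) = a m)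
    (hsum : Sa a n = -x) : ∀ m, Sa a (m + n) = Sa a m - x := by
  intro m
  induction m with
  | zero => simpa [Sa_zero] using hsum
  | succ m ih =>
      have : m + 1 + n = (m + n) + 1 := by ring
      rw [this, Sa_succ, ih, hper, Sa_succ]; ring

/-- Cycle-lemma counting: number of strict running minima positions in the second
window equals `x`. -/
lemma cycle_count {x : ℤ} {n : ℕ} (hn : 1 ≤ n) (hx : 1 ≤ x) {a : ℕ → ℤ}
    (ha : ∀ m, -1 ≤ a m) (hS : ∀ m, Sa a (m + n) = Sa a m - x) :
    ((Finset.Ico n (n + n)).filter (fun p => ∀ l < p, Sa a p < Sa a l)).card = x.toNat := by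
  classical
  have hne : ((Finset.range n).image (Sa a)).Nonempty :=
    ⟨Sa a 0, Finset.mem_image.2 ⟨0, Finset.mem_range.2 (by omega), rfl⟩⟩
  set m0 : ℤ := ((Finset.range n).image (Sa a)).min' hne with hm0
  have hm0le : ∀ l < n, m0 ≤ Sa a l := fun l hl =>
    Finset.min'_le _ _ (Finset.mem_image.2 ⟨l, Finset.mem_range.2 hl, rfl⟩)
  obtain ⟨lst, hlst, hlsteq⟩ : ∃ l < n, Sa a l = m0 := by
    obtain ⟨l, hl, he⟩ := Finset.mem_image.1 (Finset.min'_mem _ hne)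
    exact ⟨l, Finset.mem_range.1 hl, he⟩
  have hm0nonpos : m0 ≤ 0 := by simpa [Sa_zero] using hm0le 0 hn
  have hcard : (Finset.Ico (m0 - x) m0).card = x.toNat := by
    rw [Int.card_Ico]; congr 1; ring
  rw [← hcard]
  apply Finset.card_bij (fun p _ => Sa a p)
  · -- maps into
    intro p hp
    simp only [Finset.mem_filter, Finset.mem_Ico] at hp ⊢
    obtain ⟨⟨hpn, hp2n⟩, hgood⟩ := hp
    constructor
    · have h1 : Sa a ((p - n) + n) = Sa a (p - n) - x := hS (p - n)
      rw [show p - n + n = p by omega] at h1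
      have := hm0le (p - n) (by omega)
      omega
    · have := hgood lst (by omega)
      omega
  · -- injective
    intro p hp q hq heq
    simp only [Finset.mem_filter, Finset.mem_Ico] at hp hq
    by_contra hne'
    rcases Nat.lt_or_ge p q with h | h
    · have := hq.2 p h; omega
    · have := hp.2 q (by omega); omega
  · -- surjective
    intro v hv
    simp only [Finset.mem_Ico] at hv
    have hP : ∃ m, Sa a m ≤ v := by
      refine ⟨lst + n, ?_⟩
      rw [hS lst, hlsteq]; omega
    have hw : Sa a (lst + n) ≤ v := by rw [hS lst, hlsteq]; omega
    obtain ⟨p, hp1, hp2, hple⟩ : ∃ p, Sa a p ≤ v ∧ (∀ l < p, v < Sa a l) ∧ p ≤ lst + n :=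
      ⟨Nat.find hP, Nat.find_spec hP,
        fun l hl => by have h := Nat.find_min hP hl; omega, Nat.find_le hw⟩
    have hppos : 1 ≤ p := by
      rcases Nat.eq_zero_or_pos p with h0 | h0
      · exfalso; rw [h0] at hp1; rw [Sa_zero] at hp1; omega
      · exact h0
    have hpv : Sa a p = v := by
      obtain ⟨q, rfl⟩ : ∃ q, p = q + 1 := ⟨p - 1, by omega⟩
      have := hp2 q (by omega)
      have := ha q
      rw [Sa_succ] at hp1 ⊢
      omega
    have hpn : n ≤ p := by
      by_contra hlt
      push_neg at hlt
      have := hm0le p hlt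
      omega
    have hp2n : p < n + n := by
      omega
    refine ⟨p, ?_, hpv⟩
    simp only [Finset.mem_filter, Finset.mem_Ico]
    exact ⟨⟨hpn, hp2n⟩, fun l hl => by have := hp2 l hl; omega⟩

lemma Sa_shift (a : ℕ → ℤ) (c : ℕ) : ∀ k, Sa (fun m => a (m + c)) k = Sa a (c + k) - Sa a c := by
  intro k
  induction k with
  | zero => simp [Sa_zero]
  | succ k ih =>
      rw [Sa_succ, ih, show c + (k + 1) = (c + k) + 1 by ring, Sa_succ,
        show k + c = c + k by ring]
      ring

/-- The number of cyclic shifts (by `c ∈ [0, n)`) of a periodic step sequence with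
period sum `-x` that satisfy the first-passage property is `x`. -/
lemma shift_count {x : ℤ} {n : ℕ} (hn : 1 ≤ n) (hx : 1 ≤ x) {a : ℕ → ℤ}
    (ha : ∀ m, -1 ≤ a m) (hper : ∀ m, a (m + n) = a m) (hsum : Sa a n = -x) :
    ((Finset.range n).filter (fun c => FP x n (fun m => a (m + c)))).card = x.toNat := by
  classical
  have hS := Sa_add hper hsum
  have hkey : ∀ c < n, (FP x n (fun m => a (m + c)) ↔ ∀ l < c + n, Sa a (c + n) < Sa a l) := by
    intro c hc
    have hcn : Sa a (c + n) = Sa a c - x := hS c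
    constructor
    · intro hfp l hl
      -- first reduce to the window (c, c+n)
      have hwin : ∀ k, 1 ≤ k → k < n → Sa a (c + n) < Sa a (c + k) := by
        intro k hk1 hk2
        have := hfp.1 k hk1 hk2
        rw [Sa_shift] at this
        omega
      rcases Nat.lt_or_ge c l with hcl | hcl
      · -- l in the window
        have : l = c + (l - c) := by omega
        rw [this]
        exact hwin (l - c) (by omega) (by omega)
      rcases Nat.eq_or_lt_of_le hcl with rfl | hlc
      · omega
      · -- l < c : use periodicity
        have h1 : Sa a (l + n) = Sa a l - x := hS l
        have h2 : Sa a (c + n) < Sa a (l + n) := by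
          have : l + n = c + (l + n - c) := by omega
          rw [this]
          exact hwin (l + n - c) (by omega) (by omega)
        omega
    · intro hgood
      constructor
      · intro k hk1 hk2
        rw [Sa_shift]
        have := hgood (c + k) (by omega)
        omega
      · rw [Sa_shift]
        omega
  have hbij : ((Finset.range n).filter (fun c => FP x n (fun m => a (m + c)))).card
      = ((Finset.Ico n (n + n)).filter (fun p => ∀ l < p, Sa a p < Sa a l)).card := by
    apply Finset.card_bij (fun c _ => c + n)
    · intro c hc
      simp only [Finset.mem_filter, Finset.mem_range] at hc
      simp only [Finset.mem_filter, Finset.mem_Ico]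
      exact ⟨⟨by omega, by omega⟩, (hkey c hc.1).1 hc.2⟩
    · intro c hc d hd h
      omega
    · intro p hp
      simp only [Finset.mem_filter, Finset.mem_Ico] at hp
      refine ⟨p - n, ?_, by omega⟩
      simp only [Finset.mem_filter, Finset.mem_range]
      refine ⟨by omega, (hkey (p - n) (by omega)).2 ?_⟩
      rw [show p - n + n = p by omega]
      exact hp.2
  rw [hbij]
  exact cycle_count hn hx ha hS

end KempAux

open MeasureTheory ProbabilityTheory
open scoped ENNReal

namespace KempAux

lemma measurable_int (s : Set ℤ) : MeasurableSet s := s.to_countable.measurableSet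

lemma measurable_pifin {n : ℕ} (s : Set (Fin n → ℤ)) : MeasurableSet s :=
  s.to_countable.measurableSet

/-- The joint law of finitely many distinct members of an i.i.d. family is the
product of the common marginal. -/
lemma map_eq_pi {Ω : Type*} [MeasurableSpace Ω] (μ : Measure Ω) [IsProbabilityMeasure μ]
    (X : ℕ → Ω → ℤ) (hmeas : ∀ i, Measurable (X i))
    (hindep : iIndepFun X μ)
    (hident : ∀ i, Measure.map (X i) μ = Measure.map (X 0) μ)
    {n : ℕ} (p : Fin n → ℕ) (hp : Function.Injective p) :
    μ.map (fun ω (i : Fin n) => X (p i) ω)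
      = Measure.pi (fun _ : Fin n => μ.map (X 0)) := by
  classical
  haveI : IsProbabilityMeasure (μ.map (X 0)) :=
    Measure.isProbabilityMeasure_map (hmeas 0).aemeasurable
  have hYm : Measurable (fun ω (i : Fin n) => X (p i) ω) :=
    measurable_pi_lambda _ fun i => hmeas (p i)
  refine (Measure.pi_eq fun s hs => ?_).symm
  rw [Measure.map_apply hYm (MeasurableSet.univ_pi fun i => measurable_int (s i))]
  set sets : ℕ → Set ℤ := fun j => if h : ∃ i, p i = j then s h.choose else Set.univ
    with hsets
  have hps : ∀ i, sets (p i) = s i := by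
    intro i
    have hex : ∃ i', p i' = p i := ⟨i, rfl⟩
    simp only [hsets, dif_pos hex]
    exact congrArg s (hp hex.choose_spec)
  have h := hindep.measure_inter_preimage_eq_mul (S := Finset.univ.image p)
    (sets := sets) (fun j _ => measurable_int _)
  have hI : ((fun ω (i : Fin n) => X (p i) ω) ⁻¹' Set.pi Set.univ s)
      = ⋂ j ∈ Finset.univ.image p, X j ⁻¹' sets j := by
    ext ω
    simp only [Set.mem_preimage, Set.mem_pi, Set.mem_univ, true_implies, Set.mem_iInter,
      Finset.mem_image, Finset.mem_univ, true_and]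
    constructor
    · rintro hmem j ⟨i, rfl⟩
      rw [hps]
      exact hmem i
    · intro hmem i
      have := hmem (p i) ⟨i, rfl⟩
      rwa [hps] at this
  rw [hI, h, Finset.prod_image (fun i _ j _ hij => hp hij)]
  refine Finset.prod_congr rfl fun i _ => ?_
  rw [hps i, ← Measure.map_apply (hmeas (p i)) (measurable_int _), hident (p i)]

end KempAux

open KempAux in
/-- Kemperman identity for left-continuous integer random walks:
`P(τ_x = n) = (x/n) P(S_n = -x)`. -/
theorem stmt_5 {Ω : Type*} [MeasurableSpace Ω] (μ : Measure Ω) [IsProbabilityMeasure μ]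
    (X : ℕ → Ω → ℤ)
    (hmeas : ∀ i, Measurable (X i))
    (hindep : iIndepFun X μ)
    (hident : ∀ i, Measure.map (X i) μ = Measure.map (X 0) μ)
    (hleft : μ {ω | -1 ≤ X 0 ω} = 1)
    (x : ℤ) (hx : 1 ≤ x) (n : ℕ) (hn : 1 ≤ n) :
    (μ {ω | (∀ k : ℕ, 1 ≤ k → k < n → 0 < x + ∑ i ∈ Finset.range k, X i ω) ∧
        x + ∑ i ∈ Finset.range n, X i ω ≤ 0}).toReal
      = (x : ℝ) / (n : ℝ) * (μ {ω | ∑ i ∈ Finset.range n, X i ω = -x}).toReal := by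
  classical
  have hn' : 0 < n := hn
  haveI : NeZero n := ⟨by omega⟩
  set ν := μ.map (X 0) with hν
  haveI : IsProbabilityMeasure ν := Measure.isProbabilityMeasure_map (hmeas 0).aemeasurable
  set π := Measure.pi (fun _ : Fin n => ν) with hπ
  have hjoint : ∀ p : Fin n → ℕ, Function.Injective p →
      μ.map (fun ω (i : Fin n) => X (p i) ω) = π :=
    fun p hp => map_eq_pi μ X hmeas hindep hident p hp
  set Y : Ω → (Fin n → ℤ) := fun ω i => X i ω with hYdef
  have hYmeas : Measurable Y := measurable_pi_lambda _ fun i => hmeas i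
  have hY : μ.map Y = π := hjoint (fun i => (i : ℕ)) Fin.val_injective
  set sh : Fin n → (Fin n → ℤ) → (Fin n → ℤ) := fun c g i => g (i + c) with hsh
  have hshmeas : ∀ c, Measurable (sh c) :=
    fun c => measurable_pi_lambda _ fun i => measurable_pi_apply _
  have hshinv : ∀ c, π.map (sh c) = π := by
    intro c
    have h1 : μ.map (fun ω (i : Fin n) => X ((i + c : Fin n) : ℕ) ω) = π :=
      hjoint _ (fun i j hij => by
        have h2 : (i + c : Fin n) = j + c := Fin.val_injective hij
        exact add_right_cancel h2)
    calc π.map (sh c) = (μ.map Y).map (sh c) := by rw [hY]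
      _ = μ.map (sh c ∘ Y) := Measure.map_map (hshmeas c) hYmeas
      _ = π := h1
  -- the coordinate extension of a finite tuple to a periodic sequence
  set pext : (Fin n → ℤ) → ℕ → ℤ := fun g m => g ⟨m % n, Nat.mod_lt m hn'⟩ with hpext
  set A : Set (Fin n → ℤ) := {g | FP x n (pext g)} with hA
  set B : Set (Fin n → ℤ) := {g | Sa (pext g) n = -x} with hB
  set G : Set (Fin n → ℤ) := {g | ∀ i, -1 ≤ g i} with hG
  -- translation of the events
  have hSaY : ∀ (ω : Ω) (k : ℕ), k ≤ n → Sa (pext (Y ω)) k = ∑ i ∈ Finset.range k, X i ω := by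
    intro ω k hk
    refine Finset.sum_congr rfl fun i hi => ?_
    have hi' : i % n = i := Nat.mod_eq_of_lt (lt_of_lt_of_le (Finset.mem_range.1 hi) hk)
    simp [hpext, hYdef, hi']
  have hevA : {ω | (∀ k : ℕ, 1 ≤ k → k < n → 0 < x + ∑ i ∈ Finset.range k, X i ω) ∧
      x + ∑ i ∈ Finset.range n, X i ω ≤ 0} = Y ⁻¹' A := by
    ext ω
    simp only [Set.mem_setOf_eq, Set.mem_preimage, hA, FP]
    constructor
    · rintro ⟨h1, h2⟩
      exact ⟨fun k hk1 hk2 => by rw [hSaY ω k hk2.le]; exact h1 k hk1 hk2,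
        by rw [hSaY ω n le_rfl]; exact h2⟩
    · rintro ⟨h1, h2⟩
      refine ⟨fun k hk1 hk2 => ?_, ?_⟩
      · have := h1 k hk1 hk2; rwa [hSaY ω k hk2.le] at this
      · rwa [hSaY ω n le_rfl] at h2
  have hevB : {ω | ∑ i ∈ Finset.range n, X i ω = -x} = Y ⁻¹' B := by
    ext ω
    simp only [Set.mem_setOf_eq, Set.mem_preimage, hB]
    rw [hSaY ω n le_rfl]
  have hPA : μ {ω | (∀ k : ℕ, 1 ≤ k → k < n → 0 < x + ∑ i ∈ Finset.range k, X i ω) ∧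
      x + ∑ i ∈ Finset.range n, X i ω ≤ 0} = π A := by
    rw [hevA, ← hY, Measure.map_apply hYmeas (measurable_pifin A)]
  have hPB : μ {ω | ∑ i ∈ Finset.range n, X i ω = -x} = π B := by
    rw [hevB, ← hY, Measure.map_apply hYmeas (measurable_pifin B)]
  -- G has full measure
  have hGfull : π G = 1 := by
    have hGpi : G = Set.pi Set.univ (fun _ : Fin n => {v : ℤ | -1 ≤ v}) := by
      ext g; simp [hG, Set.mem_pi]
    rw [hGpi, hπ, Measure.pi_pi]
    have hν1 : ν {v : ℤ | -1 ≤ v} = 1 := by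
      rw [hν, Measure.map_apply (hmeas 0) (measurable_int _)]
      exact hleft
    simp [hν1]
  have hGcompl : π Gᶜ = 0 := by
    have := measure_compl (measurable_pifin G) (measure_ne_top π G)
    rw [hGfull] at this
    simpa using this
  have hAG : π (A ∩ G) = π A := measure_inter_conull hGcompl
  have hBG : π (B ∩ G) = π B := measure_inter_conull hGcompl
  -- periodic extension facts
  have hext_shift : ∀ (c : Fin n) (g : Fin n → ℤ) (m : ℕ),
      pext (sh c g) m = pext g (m + (c : ℕ)) := by
    intro c g m
    simp only [hpext, hsh]
    congr 1
    apply Fin.ext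
    rw [Fin.val_add]
    simp [Nat.mod_add_mod]
  have hext_per : ∀ (g : Fin n → ℤ) (m : ℕ), pext g (m + n) = pext g m := by
    intro g m; simp [hpext, Nat.add_mod_right]
  have hsum_ext : ∀ g : Fin n → ℤ, Sa (pext g) n = ∑ i : Fin n, g i := by
    intro g
    calc Sa (pext g) n = ∑ m ∈ Finset.range n, pext g m := rfl
      _ = ∑ i : Fin n, pext g (i : ℕ) := (Fin.sum_univ_eq_sum_range _ n).symm
      _ = ∑ i : Fin n, g i := by
          refine Finset.sum_congr rfl fun i _ => ?_
          simp [hpext, Nat.mod_eq_of_lt i.isLt]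
  have hshG : ∀ (c : Fin n) (g : Fin n → ℤ), sh c g ∈ G ↔ g ∈ G := by
    intro c g
    constructor
    · intro h i
      have := h (i - c)
      simpa [hsh, sub_add_cancel] using this
    · intro h i
      exact h _
  have hsh_sum : ∀ (c : Fin n) (g : Fin n → ℤ), (∑ i : Fin n, sh c g i) = ∑ i, g i := by
    intro c g
    exact Fintype.sum_equiv (Equiv.addRight c) _ _ (fun i => rfl)
  set T : Set (Fin n → ℤ) := A ∩ G with hT
  -- pointwise counting identity
  have hptw : ∀ g : Fin n → ℤ,
      (∑ c : Fin n, Set.indicator (sh c ⁻¹' T) (fun _ => (1 : ℝ≥0∞)) g)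
        = Set.indicator (B ∩ G) (fun _ => (x.toNat : ℝ≥0∞)) g := by
    intro g
    by_cases hg : g ∈ G
    · by_cases hgB : g ∈ B
      · -- count equals x
        have hcnt := shift_count (x := x) (n := n) hn hx (a := pext g)
          (fun m => hg _) (hext_per g) hgB
        have hmemiff : ∀ c : Fin n, g ∈ sh c ⁻¹' T ↔ FP x n (fun m => pext g (m + (c : ℕ))) := by
          intro c
          have h1 : sh c g ∈ G := (hshG c g).2 hg
          have h2 : pext (sh c g) = fun m => pext g (m + (c : ℕ)) := funext (hext_shift c g)
          simp only [Set.mem_preimage, hT, Set.mem_inter_iff, h1, and_true, hA,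
            Set.mem_setOf_eq, h2]
        have hcard : (Finset.univ.filter (fun c : Fin n => g ∈ sh c ⁻¹' T)).card = x.toNat := by
          rw [← hcnt]
          refine Finset.card_bij (fun c _ => (c : ℕ)) ?_ ?_ ?_
          · intro c hc
            simp only [Finset.mem_filter, Finset.mem_univ, true_and] at hc
            simp only [Finset.mem_filter, Finset.mem_range]
            exact ⟨c.isLt, (hmemiff c).1 hc⟩
          · intro c _ d _ h
            exact Fin.val_injective h
          · intro c hc
            simp only [Finset.mem_filter, Finset.mem_range] at hc
            refine ⟨(⟨c, hc.1⟩ : Fin n), ?_, rfl⟩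
            simp only [Finset.mem_filter, Finset.mem_univ, true_and]
            exact (hmemiff ⟨c, hc.1⟩).2 hc.2
        calc (∑ c : Fin n, Set.indicator (sh c ⁻¹' T) (fun _ => (1 : ℝ≥0∞)) g)
            = ∑ c : Fin n, if g ∈ sh c ⁻¹' T then (1 : ℝ≥0∞) else 0 := by
              refine Finset.sum_congr rfl fun c _ => ?_
              by_cases hc : g ∈ sh c ⁻¹' T <;> simp [hc]
          _ = ((Finset.univ.filter (fun c : Fin n => g ∈ sh c ⁻¹' T)).card : ℝ≥0∞) := by
              rw [Finset.card_filter]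
              push_cast
              rfl
          _ = (x.toNat : ℝ≥0∞) := by rw [hcard]
          _ = Set.indicator (B ∩ G) (fun _ => (x.toNat : ℝ≥0∞)) g :=
              (Set.indicator_of_mem (Set.mem_inter hgB hg) (fun _ => (x.toNat : ℝ≥0∞))).symm
      · -- g not in B : no shift is in A
        have hzero : ∀ c : Fin n, g ∉ sh c ⁻¹' T := by
          intro c hmem
          obtain ⟨hcA, hcG⟩ := hmem
          have hsum' : Sa (pext (sh c g)) n = -x :=
            FP_sum (fun m => hcG _) hx hn hcA
          rw [hsum_ext, hsh_sum] at hsum'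
          rw [← hsum_ext] at hsum'
          exact hgB hsum'
        rw [Set.indicator_of_notMem (fun hmem => hgB hmem.1)]
        exact Finset.sum_eq_zero fun c _ => Set.indicator_of_notMem (hzero c) _
    · -- g not in G
      have hzero : ∀ c : Fin n, g ∉ sh c ⁻¹' T := by
        intro c hmem
        exact hg ((hshG c g).1 hmem.2)
      rw [Set.indicator_of_notMem (fun hmem => hg hmem.2)]
      refine Finset.sum_eq_zero fun c _ => Set.indicator_of_notMem (hzero c) _
  -- shift invariance of the probabilities
  have hinv : ∀ c : Fin n, π (sh c ⁻¹' T) = π T := by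
    intro c
    rw [← Measure.map_apply (hshmeas c) (measurable_pifin T), hshinv c]
  -- integrate the counting identity
  have hsum_meas : (n : ℝ≥0∞) * π T = (x.toNat : ℝ≥0∞) * π (B ∩ G) := by
    have h1 : ∑ c : Fin n, π (sh c ⁻¹' T) = (n : ℝ≥0∞) * π T := by
      simp [hinv, Finset.sum_const, Finset.card_univ, mul_comm]
    rw [← h1]
    calc ∑ c : Fin n, π (sh c ⁻¹' T)
        = ∑ c : Fin n, ∫⁻ g, Set.indicator (sh c ⁻¹' T) (fun _ => (1 : ℝ≥0∞)) g ∂π := by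
          refine Finset.sum_congr rfl fun c _ => ?_
          rw [lintegral_indicator_const (measurable_pifin _), one_mul]
      _ = ∫⁻ g, ∑ c : Fin n, Set.indicator (sh c ⁻¹' T) (fun _ => (1 : ℝ≥0∞)) g ∂π :=
          (lintegral_finset_sum _ fun c _ => measurable_one.indicator (measurable_pifin _)).symm
      _ = ∫⁻ g, Set.indicator (B ∩ G) (fun _ => (x.toNat : ℝ≥0∞)) g ∂π :=
          lintegral_congr hptw
      _ = (x.toNat : ℝ≥0∞) * π (B ∩ G) :=
          lintegral_indicator_const (measurable_pifin _) _
  -- conclude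
  rw [hPA, hPB, ← hAG, ← hBG]
  have hreal : (n : ℝ) * (π T).toReal = (x : ℝ) * (π (B ∩ G)).toReal := by
    have h2 := congrArg ENNReal.toReal hsum_meas
    rw [ENNReal.toReal_mul, ENNReal.toReal_mul] at h2
    have hxr : ((x.toNat : ℝ≥0∞)).toReal = (x : ℝ) := by
      rw [ENNReal.toReal_natCast]
      exact_mod_cast congrArg (Int.cast : ℤ → ℝ) (Int.toNat_of_nonneg (by omega))
    have hnr : ((n : ℝ≥0∞)).toReal = (n : ℝ) := by simp
    rw [hxr, hnr] at h2
    exact h2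
  have hnne : (n : ℝ) ≠ 0 := Nat.cast_ne_zero.2 (by omega)
  rw [div_mul_eq_mul_div, eq_div_iff hnne]
  linarith
end

section
/- Let m ≥ 0 and r ≥ 0 be integers, and let (h_n) and (g_n) be real sequences with |h_n|, |g_n| ≤ M for n ∈ {0,1} and |h_n|, |g_n| ≤ M (log n)^r / n^{(m+3)/2} for n ≥ 2. Then the convolution u_n = ∑_{k=0}^n h_k g_{n-k} satisfies |u_n| ≤ C(m,r) M² (log n)^r / n^{(m+3)/2} for all n ≥ 2, with a constant C(m,r) depending only on m and r. -/
lemma logNat_nonneg (k : ℕ) : 0 ≤ Real.log k := by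
  cases k with
  | zero => simp
  | succ n => exact Real.log_nonneg (by exact_mod_cast Nat.one_le_iff_ne_zero.mpr (Nat.succ_ne_zero n))

noncomputable def Fc (r k : ℕ) : ℝ := (Real.log k) ^ r / (k : ℝ) ^ ((3:ℝ)/2)

lemma Fc_nonneg (r k : ℕ) : 0 ≤ Fc r k := by
  have := logNat_nonneg k
  unfold Fc; positivity

lemma summable_Fc (r : ℕ) : Summable (Fc r) := by
  set ε : ℝ := 1 / (4 * (r + 1)) with hεdef
  have hε0 : 0 < ε := by positivity
  have hεr : ε * r ≤ 1/4 := by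
    rw [hεdef, div_mul_eq_mul_div, div_le_div_iff₀ (by positivity) (by norm_num)]
    nlinarith [Nat.cast_nonneg (α := ℝ) r]
  have key : ∀ k : ℕ, Fc r k ≤ ε⁻¹ ^ r * (1 / (k : ℝ) ^ ((5:ℝ)/4)) := by
    intro k
    rcases Nat.eq_zero_or_pos k with hk | hk
    · subst hk
      simp [Fc, Real.zero_rpow (by norm_num : ((3:ℝ)/2) ≠ 0),
        Real.zero_rpow (by norm_num : ((5:ℝ)/4) ≠ 0)]
    · have hk1 : (1:ℝ) ≤ (k:ℝ) := by exact_mod_cast hk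
      have hk0 : (0:ℝ) < (k:ℝ) := by linarith
      have hlog : Real.log k ≤ (k:ℝ) ^ ε / ε := Real.log_le_rpow_div (le_of_lt hk0) hε0
      have h1 : (Real.log k) ^ r ≤ ((k:ℝ) ^ ε / ε) ^ r :=
        pow_le_pow_left₀ (logNat_nonneg k) hlog r
      have h2 : ((k:ℝ) ^ ε / ε) ^ r = (k:ℝ) ^ (ε * r) * ε⁻¹ ^ r := by
        rw [div_pow, ← Real.rpow_natCast ((k:ℝ) ^ ε) r, ← Real.rpow_mul (le_of_lt hk0),
          div_eq_mul_inv, inv_pow]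
      have h3 : Fc r k ≤ ((k:ℝ) ^ (ε * r) * ε⁻¹ ^ r) / (k:ℝ) ^ ((3:ℝ)/2) := by
        unfold Fc
        apply div_le_div_of_nonneg_right ?_ (by positivity)
        · rw [← h2]; exact h1
      refine h3.trans ?_
      have h4 : (k:ℝ) ^ (ε * r) / (k:ℝ) ^ ((3:ℝ)/2) = (k:ℝ) ^ (ε * r - (3:ℝ)/2) := by
        rw [Real.rpow_sub hk0]
      have h5 : (k:ℝ) ^ (ε * r - (3:ℝ)/2) ≤ (k:ℝ) ^ (-(5:ℝ)/4) :=
        Real.rpow_le_rpow_of_exponent_le hk1 (by linarith)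
      have h6 : (k:ℝ) ^ (-(5:ℝ)/4) = 1 / (k:ℝ) ^ ((5:ℝ)/4) := by
        rw [neg_div, Real.rpow_neg (le_of_lt hk0), one_div]
      calc (k:ℝ) ^ (ε * r) * ε⁻¹ ^ r / (k:ℝ) ^ ((3:ℝ)/2)
          = ε⁻¹ ^ r * ((k:ℝ) ^ (ε * r) / (k:ℝ) ^ ((3:ℝ)/2)) := by ring
        _ ≤ ε⁻¹ ^ r * (1 / (k : ℝ) ^ ((5:ℝ)/4)) := by
            rw [h4]
            apply mul_le_mul_of_nonneg_left _ (by positivity)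
            rw [← h6]; exact h5
  refine Summable.of_nonneg_of_le (fun k => Fc_nonneg r k) key ?_
  exact ((Real.summable_one_div_nat_rpow.mpr (by norm_num)).mul_left _)

lemma sum_abs_le_aux (r : ℕ) (T : ℝ)
    (hT : ∀ N, ∑ k ∈ Finset.range N, Fc r k ≤ T)
    (M : ℝ) (hM : 0 ≤ M) (h : ℕ → ℝ) (h0 : |h 0| ≤ M) (h1 : |h 1| ≤ M)
    (hb : ∀ k, 2 ≤ k → |h k| ≤ M * Fc r k) :
    ∀ N, ∑ k ∈ Finset.range N, |h k| ≤ M * (2 + T) := by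
  intro N
  have step : ∀ k ∈ Finset.range N, |h k| ≤
      M * Fc r k + ((if k = 0 then M else 0) + (if k = 1 then M else 0)) := by
    intro k _
    have hF := Fc_nonneg r k
    match k with
    | 0 => simp only [if_pos rfl]; norm_num; nlinarith
    | 1 => simp only []; norm_num; nlinarith
    | (j+2) =>
      have := hb (j+2) (by omega)
      simp only [if_neg (by omega : j + 2 ≠ 0), if_neg (by omega : j + 2 ≠ 1)]
      linarith
  calc ∑ k ∈ Finset.range N, |h k|
      ≤ ∑ k ∈ Finset.range N, (M * Fc r k + ((if k = 0 then M else 0) + (if k = 1 then M else 0))) :=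
        Finset.sum_le_sum step
    _ = M * (∑ k ∈ Finset.range N, Fc r k)
        + ((∑ k ∈ Finset.range N, if k = 0 then M else 0)
          + (∑ k ∈ Finset.range N, if k = 1 then M else 0)) := by
        rw [Finset.sum_add_distrib, Finset.sum_add_distrib, Finset.mul_sum]
    _ ≤ M * T + (M + M) := by
        have e0 : (∑ k ∈ Finset.range N, if k = 0 then M else 0) ≤ M := by
          rw [Finset.sum_ite_eq' (Finset.range N) 0 (fun _ => M)]
          split_ifs <;> linarith
        have e1 : (∑ k ∈ Finset.range N, if k = 1 then M else 0) ≤ M := by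
          rw [Finset.sum_ite_eq' (Finset.range N) 1 (fun _ => M)]
          split_ifs <;> linarith
        have := mul_le_mul_of_nonneg_left (hT N) hM
        linarith
    _ = M * (2 + T) := by ring

/-- Norm bound for convolution of sequences with `(log n)^r / n^{(m+3)/2}` decay. -/
theorem stmt_7 (m r : ℕ) :
    ∃ C : ℝ, ∀ (M : ℝ) (h g : ℕ → ℝ), 0 ≤ M →
      |h 0| ≤ M → |h 1| ≤ M → |g 0| ≤ M → |g 1| ≤ M →
      (∀ n : ℕ, 2 ≤ n → |h n| ≤ M * (Real.log n) ^ r / (n : ℝ) ^ (((m : ℝ) + 3) / 2)) →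
      (∀ n : ℕ, 2 ≤ n → |g n| ≤ M * (Real.log n) ^ r / (n : ℝ) ^ (((m : ℝ) + 3) / 2)) →
      ∀ n : ℕ, 2 ≤ n →
        |∑ k ∈ Finset.range (n + 1), h k * g (n - k)|
          ≤ C * M ^ 2 * (Real.log n) ^ r / (n : ℝ) ^ (((m : ℝ) + 3) / 2) := by
  have hsum := summable_Fc r
  set T : ℝ := ∑' k, Fc r k with hTdef
  have hT0 : 0 ≤ T := tsum_nonneg (Fc_nonneg r)
  have hTpart : ∀ N, ∑ k ∈ Finset.range N, Fc r k ≤ T := fun N =>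
    Summable.sum_le_tsum (Finset.range N) (fun i _ => Fc_nonneg r i) hsum
  set a : ℝ := ((m : ℝ) + 3) / 2 with hadef
  have ha32 : (3:ℝ)/2 ≤ a := by
    have : (0:ℝ) ≤ (m:ℝ) := Nat.cast_nonneg m
    rw [hadef]; linarith
  have ha0 : 0 ≤ a := by linarith
  set P2 : ℝ := (2:ℝ) ^ a with hP2def
  have hP2pos : 0 < P2 := Real.rpow_pos_of_pos (by norm_num) a
  have hP21 : 1 ≤ P2 := by
    have := Real.rpow_le_rpow_of_exponent_le (by norm_num : (1:ℝ) ≤ 2) ha0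
    simpa [Real.rpow_zero] using this
  have hL2pos : (0:ℝ) < Real.log 2 ^ r := pow_pos (Real.log_pos (by norm_num)) r
  refine ⟨2 * P2 * (2 + T) + 3 * P2 / Real.log 2 ^ r, ?_⟩
  intro M h g hM h0 h1 g0 g1 hh hg n hn
  set C : ℝ := 2 * P2 * (2 + T) + 3 * P2 / Real.log 2 ^ r with hCdef
  -- coefficient bounds in terms of Fc
  have hconv : ∀ (f : ℕ → ℝ),
      (∀ k, 2 ≤ k → |f k| ≤ M * Real.log k ^ r / (k:ℝ) ^ a) →
      ∀ k, 2 ≤ k → |f k| ≤ M * Fc r k := by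
    intro f hf k hk
    have hk1 : (1:ℝ) ≤ (k:ℝ) := by exact_mod_cast (by omega : 1 ≤ k)
    have hk0 : (0:ℝ) < (k:ℝ) := by linarith
    refine (hf k hk).trans ?_
    have hd : (k:ℝ) ^ ((3:ℝ)/2) ≤ (k:ℝ) ^ a := Real.rpow_le_rpow_of_exponent_le hk1 ha32
    have hnum : 0 ≤ M * Real.log k ^ r := mul_nonneg hM (pow_nonneg (logNat_nonneg k) r)
    have hpos : (0:ℝ) < (k:ℝ) ^ ((3:ℝ)/2) := Real.rpow_pos_of_pos hk0 _
    have : M * Real.log k ^ r / (k:ℝ) ^ a ≤ M * Real.log k ^ r / (k:ℝ) ^ ((3:ℝ)/2) := by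
      gcongr
    refine this.trans_eq ?_
    unfold Fc; ring
  have hhsum := sum_abs_le_aux r T hTpart M hM h h0 h1 (hconv h hh)
  have hgsum := sum_abs_le_aux r T hTpart M hM g g0 g1 (hconv g hg)
  have hn1 : (1:ℝ) ≤ (n:ℝ) := by exact_mod_cast (by omega : 1 ≤ n)
  have hn0 : (0:ℝ) < (n:ℝ) := by linarith
  have hnP : (0:ℝ) < (n:ℝ) ^ a := Real.rpow_pos_of_pos hn0 a
  have hL : (0:ℝ) ≤ Real.log n ^ r := pow_nonneg (logNat_nonneg n) r
  -- key decay bound for indices in the "large half"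
  have hkey : ∀ (f : ℕ → ℝ),
      (∀ k, 2 ≤ k → |f k| ≤ M * Real.log k ^ r / (k:ℝ) ^ a) →
      ∀ j, 2 ≤ j → j ≤ n → n ≤ 2 * j →
        |f j| ≤ P2 * (M * Real.log n ^ r) / (n:ℝ) ^ a := by
    intro f hf j hj2 hjn hnj
    have hj1 : (1:ℝ) ≤ (j:ℝ) := by exact_mod_cast (by omega : 1 ≤ j)
    have hj0 : (0:ℝ) < (j:ℝ) := by linarith
    refine (hf j hj2).trans ?_
    have hlogle : Real.log j ^ r ≤ Real.log n ^ r :=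
      pow_le_pow_left₀ (logNat_nonneg j) (Real.log_le_log hj0 (by exact_mod_cast hjn)) r
    have hjn2 : (n:ℝ) / 2 ≤ (j:ℝ) := by
      have : (n:ℝ) ≤ 2 * (j:ℝ) := by exact_mod_cast hnj
      linarith
    have hrp : ((n:ℝ)/2) ^ a ≤ (j:ℝ) ^ a := Real.rpow_le_rpow (by positivity) hjn2 ha0
    have hd2 : ((n:ℝ)/2) ^ a = (n:ℝ) ^ a / P2 := by
      rw [hP2def]; exact Real.div_rpow (le_of_lt hn0) (by norm_num) a
    calc M * Real.log j ^ r / (j:ℝ) ^ a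
        ≤ M * Real.log n ^ r / (((n:ℝ))/2) ^ a := by
          apply div_le_div₀ (mul_nonneg hM hL) (mul_le_mul_of_nonneg_left hlogle hM)
            (by rw [hd2]; positivity) hrp
      _ = P2 * (M * Real.log n ^ r) / (n:ℝ) ^ a := by
          rw [hd2, div_div_eq_mul_div]; ring
  set B : ℝ := P2 * (M * Real.log n ^ r) / (n:ℝ) ^ a with hBdef
  have hB0 : 0 ≤ B := by
    rw [hBdef]
    exact div_nonneg (mul_nonneg hP2pos.le (mul_nonneg hM hL)) hnP.le
  rcases Nat.lt_or_ge n 3 with hn3 | hn3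
  · -- n = 2
    have hn2 : n = 2 := by omega
    subst hn2
    have hg2 := hkey g hg 2 le_rfl le_rfl (by norm_num)
    have hh2 := hkey h hh 2 le_rfl le_rfl (by norm_num)
    have hsum3 : (∑ k ∈ Finset.range (2 + 1), h k * g (2 - k))
        = h 0 * g 2 + h 1 * g 1 + h 2 * g 0 := by
      simp [Finset.sum_range_succ]
    rw [hsum3]
    have e1 : |h 0 * g 2| ≤ M * B := by
      rw [abs_mul]; exact mul_le_mul h0 hg2 (abs_nonneg _) hM
    have e2 : |h 1 * g 1| ≤ M * M := by
      rw [abs_mul]; exact mul_le_mul h1 g1 (abs_nonneg _) hM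
    have e3 : |h 2 * g 0| ≤ B * M := by
      rw [abs_mul]; exact mul_le_mul hh2 g0 (abs_nonneg _) hB0
    have habs := abs_add_three (h 0 * g 2) (h 1 * g 1) (h 2 * g 0)
    simp only [Nat.cast_ofNat]
    have hBeq : B = M * Real.log 2 ^ r := by
      rw [hBdef, hP2def]
      simp only [Nat.cast_ofNat]
      field_simp
    have hRHS : C * M ^ 2 * Real.log 2 ^ r / (2:ℝ) ^ a
        = 2 * (2 + T) * (M ^ 2 * Real.log 2 ^ r) + 3 * M ^ 2 := by
      rw [hCdef, hP2def]
      have h2a : ((2:ℝ) ^ a) ≠ 0 := (Real.rpow_pos_of_pos (by norm_num) a).ne'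
      field_simp
    rw [hRHS]
    have hQ0 : 0 ≤ M ^ 2 * Real.log 2 ^ r := mul_nonneg (sq_nonneg M) hL2pos.le
    nlinarith [mul_nonneg hQ0 hT0, sq_nonneg M, e1, e2, e3, habs]
  · -- n ≥ 3
    have hsplit := Finset.sum_filter_add_sum_filter_not (Finset.range (n+1))
      (fun k => 2 * k ≤ n) (fun k => h k * g (n - k))
    set S1 := (Finset.range (n+1)).filter (fun k => 2 * k ≤ n) with hS1
    set S2 := (Finset.range (n+1)).filter (fun k => ¬ 2 * k ≤ n) with hS2
    have habs : |∑ k ∈ Finset.range (n + 1), h k * g (n - k)|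
        ≤ |∑ k ∈ S1, h k * g (n - k)| + |∑ k ∈ S2, h k * g (n - k)| := by
      rw [← hsplit]; exact abs_add_le _ _
    have hb1 : |∑ k ∈ S1, h k * g (n - k)| ≤ (M * (2 + T)) * B := by
      calc |∑ k ∈ S1, h k * g (n - k)| ≤ ∑ k ∈ S1, |h k * g (n - k)| :=
            Finset.abs_sum_le_sum_abs _ _
        _ ≤ ∑ k ∈ S1, |h k| * B := by
            apply Finset.sum_le_sum
            intro k hk
            rw [abs_mul]
            apply mul_le_mul_of_nonneg_left _ (abs_nonneg _)
            rw [hS1, Finset.mem_filter, Finset.mem_range] at hk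
            exact hkey g hg (n - k) (by omega) (by omega) (by omega)
        _ = (∑ k ∈ S1, |h k|) * B := by rw [← Finset.sum_mul]
        _ ≤ (M * (2 + T)) * B := by
            apply mul_le_mul_of_nonneg_right _ hB0
            refine (Finset.sum_le_sum_of_subset_of_nonneg (Finset.filter_subset _ _)
              (fun i _ _ => abs_nonneg _)).trans (hhsum (n+1))
    have hb2 : |∑ k ∈ S2, h k * g (n - k)| ≤ B * (M * (2 + T)) := by
      calc |∑ k ∈ S2, h k * g (n - k)| ≤ ∑ k ∈ S2, |h k * g (n - k)| :=
            Finset.abs_sum_le_sum_abs _ _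
        _ ≤ ∑ k ∈ S2, B * |g (n - k)| := by
            apply Finset.sum_le_sum
            intro k hk
            rw [abs_mul]
            apply mul_le_mul_of_nonneg_right _ (abs_nonneg _)
            rw [hS2, Finset.mem_filter, Finset.mem_range] at hk
            exact hkey h hh k (by omega) (by omega) (by omega)
        _ = B * (∑ k ∈ S2, |g (n - k)|) := by rw [← Finset.mul_sum]
        _ ≤ B * (M * (2 + T)) := by
            apply mul_le_mul_of_nonneg_left _ hB0
            have hsub : ∑ k ∈ S2, |g (n - k)| ≤ ∑ k ∈ Finset.range (n+1), |g (n - k)| :=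
              Finset.sum_le_sum_of_subset_of_nonneg (Finset.filter_subset _ _)
                (fun i _ _ => abs_nonneg _)
            have hrefl : ∑ k ∈ Finset.range (n+1), |g (n - k)|
                = ∑ k ∈ Finset.range (n+1), |g k| := by
              simpa using Finset.sum_range_reflect (fun j => |g j|) (n+1)
            rw [hrefl] at hsub
            exact hsub.trans (hgsum (n+1))
    have htot : |∑ k ∈ Finset.range (n + 1), h k * g (n - k)|
        ≤ 2 * (2 + T) * M * B := by
      have := habs.trans (add_le_add hb1 hb2)
      linarith
    refine htot.trans ?_
    have heq : 2 * (2 + T) * M * B = (2 * P2 * (2 + T)) * (M ^ 2 * Real.log n ^ r) / (n:ℝ) ^ a := by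
      rw [hBdef]; ring
    rw [heq]
    have hnum : (2 * P2 * (2 + T)) * (M ^ 2 * Real.log n ^ r)
        ≤ C * (M ^ 2 * Real.log n ^ r) := by
      apply mul_le_mul_of_nonneg_right _ (mul_nonneg (sq_nonneg M) hL)
      rw [hCdef]
      have : 0 ≤ 3 * P2 / Real.log 2 ^ r := by positivity
      linarith
    calc (2 * P2 * (2 + T)) * (M ^ 2 * Real.log n ^ r) / (n:ℝ) ^ a
        ≤ C * (M ^ 2 * Real.log n ^ r) / (n:ℝ) ^ a :=
          div_le_div_of_nonneg_right hnum hnP.le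
      _ = C * M ^ 2 * Real.log n ^ r / (n:ℝ) ^ a := by ring
end

section
/- Let m ≥ 0 and r ≥ 0 be integers, and let (h_n), (g_n) be sequences with coefficient decay as in the class H_m^r such that moreover ∑_n h_n P(n) = 0 and ∑_n g_n P(n) = 0 for every polynomial P of degree ≤ ⌊m/2⌋. Then the convolution u_n = ∑_{k=0}^n h_k g_{n-k} also satisfies ∑_n u_n P(n) = 0 for every polynomial P of degree ≤ ⌊m/2⌋ and |u_n| = O((log n)^r / n^{(m+3)/2}). -/
open Real Finset Polynomial

noncomputable def phiH (r : ℕ) (a : ℝ) (n : ℕ) : ℝ :=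
  (Real.log ((n : ℝ) + 2)) ^ r / ((n : ℝ) + 1) ^ a

lemma phiH_pos (r : ℕ) (a : ℝ) (n : ℕ) : 0 < phiH r a n := by
  apply div_pos
  · apply pow_pos
    apply Real.log_pos
    have : (0:ℝ) ≤ (n:ℝ) := Nat.cast_nonneg n
    linarith
  · exact Real.rpow_pos_of_pos (by positivity) a

lemma summable_phiH (r : ℕ) {a : ℝ} (ha : 1 < a) : Summable (phiH r a) := by
  set ε : ℝ := (a - 1) / (2 * r + 2) with hεdef
  have hε0 : 0 < ε := by
    apply div_pos (by linarith) (by positivity)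
  have key : ∀ n : ℕ, phiH r a n ≤
      (2 ^ (ε * r) / ε ^ r) * ((n : ℝ) + 1) ^ (-((a + 1) / 2)) := by
    intro n
    set x : ℝ := (n : ℝ) + 2 with hxdef
    set y : ℝ := (n : ℝ) + 1 with hydef
    have hx : (0:ℝ) < x := by positivity
    have hy1 : (1:ℝ) ≤ y := by
      have : (0:ℝ) ≤ (n:ℝ) := Nat.cast_nonneg n
      simp [hydef]
    have hy : (0:ℝ) < y := by linarith
    have hlog : Real.log x ≤ x ^ ε / ε := by
      have h1 : Real.log (x ^ ε) = ε * Real.log x := Real.log_rpow hx ε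
      have h2 : Real.log (x ^ ε) ≤ x ^ ε := Real.log_le_self (Real.rpow_nonneg hx.le ε)
      rw [h1] at h2
      rw [le_div_iff₀ hε0]
      linarith
    have hlognn : 0 ≤ Real.log x := by
      apply Real.log_nonneg
      have : (0:ℝ) ≤ (n:ℝ) := Nat.cast_nonneg n
      simp [hxdef]; linarith
    have hpow : (Real.log x) ^ r ≤ (x ^ ε / ε) ^ r :=
      pow_le_pow_left₀ hlognn hlog r
    have hxε : (x ^ ε / ε) ^ r = x ^ (ε * r) / ε ^ r := by
      rw [div_pow, ← Real.rpow_natCast (x ^ ε) r, ← Real.rpow_mul hx.le]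
    have hx2y : x ≤ 2 * y := by simp [hxdef, hydef]; linarith
    have hxr : x ^ (ε * r) ≤ 2 ^ (ε * r) * y ^ (ε * r) := by
      calc x ^ (ε * r) ≤ (2 * y) ^ (ε * r) :=
            Real.rpow_le_rpow hx.le hx2y (by positivity)
        _ = 2 ^ (ε * r) * y ^ (ε * r) := Real.mul_rpow (by norm_num) hy.le
    have hexp : ε * r - a ≤ -((a + 1) / 2) := by
      have h1 : ε * r ≤ (a - 1) / 2 := by
        rw [hεdef]
        rw [div_mul_eq_mul_div, div_le_div_iff₀ (by positivity) (by norm_num)]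
        nlinarith [Nat.cast_nonneg (α := ℝ) r]
      linarith
    calc phiH r a n = (Real.log x) ^ r / y ^ a := rfl
      _ ≤ (x ^ ε / ε) ^ r / y ^ a := by gcongr
      _ = (x ^ (ε * r) / ε ^ r) / y ^ a := by rw [hxε]
      _ ≤ ((2 ^ (ε * r) * y ^ (ε * r)) / ε ^ r) / y ^ a := by gcongr
      _ = (2 ^ (ε * r) / ε ^ r) * (y ^ (ε * r) / y ^ a) := by ring
      _ = (2 ^ (ε * r) / ε ^ r) * y ^ (ε * r - a) := by
          rw [Real.rpow_sub hy]
      _ ≤ (2 ^ (ε * r) / ε ^ r) * y ^ (-((a + 1) / 2)) := by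
          apply mul_le_mul_of_nonneg_left _ (by positivity)
          exact Real.rpow_le_rpow_of_exponent_le hy1 hexp
  have hsum : Summable (fun n : ℕ => ((n : ℝ) + 1) ^ (-((a + 1) / 2))) := by
    have h1 : Summable (fun n : ℕ => 1 / ((n : ℝ)) ^ ((a + 1) / 2)) :=
      Real.summable_one_div_nat_rpow.mpr (by linarith)
    have h2 := (summable_nat_add_iff 1).mpr h1
    apply h2.congr
    intro n
    push_cast
    rw [Real.rpow_neg (by positivity), one_div]
  apply Summable.of_nonneg_of_le (fun n => (phiH_pos r a n).le) key
  exact hsum.mul_left _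

lemma phiH_half {r : ℕ} {a : ℝ} (ha : 0 ≤ a) {n k : ℕ} (hk : k ≤ n) (h2 : n ≤ 2 * k) :
    phiH r a k ≤ 2 ^ a * phiH r a n := by
  have hkpos : (0:ℝ) < (k:ℝ) + 1 := by positivity
  have hnpos : (0:ℝ) < (n:ℝ) + 1 := by positivity
  have hnum : (Real.log ((k:ℝ) + 2)) ^ r ≤ (Real.log ((n:ℝ) + 2)) ^ r := by
    apply pow_le_pow_left₀
    · apply Real.log_nonneg; have : (0:ℝ) ≤ (k:ℝ) := Nat.cast_nonneg k; linarith
    · apply Real.log_le_log (by positivity)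
      have : (k:ℝ) ≤ (n:ℝ) := Nat.cast_le.mpr hk
      linarith
  have hden : ((n:ℝ) + 1) ^ a / 2 ^ a ≤ ((k:ℝ) + 1) ^ a := by
    have h1 : ((n:ℝ) + 1) / 2 ≤ (k:ℝ) + 1 := by
      have : (n:ℝ) ≤ 2 * (k:ℝ) := by exact_mod_cast h2
      linarith
    calc ((n:ℝ) + 1) ^ a / 2 ^ a = (((n:ℝ) + 1) / 2) ^ a :=
          (Real.div_rpow hnpos.le (by norm_num : (0:ℝ) ≤ 2) a).symm
      _ ≤ ((k:ℝ) + 1) ^ a := Real.rpow_le_rpow (by positivity) h1 ha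
  have hdenpos : (0:ℝ) < ((n:ℝ) + 1) ^ a / 2 ^ a := by
    apply div_pos (Real.rpow_pos_of_pos hnpos a) (Real.rpow_pos_of_pos (by norm_num) a)
  calc phiH r a k = (Real.log ((k:ℝ) + 2)) ^ r / ((k:ℝ) + 1) ^ a := rfl
    _ ≤ (Real.log ((n:ℝ) + 2)) ^ r / (((n:ℝ) + 1) ^ a / 2 ^ a) := by
        apply div_le_div₀ (pow_nonneg (Real.log_nonneg (by
          have : (0:ℝ) ≤ (n:ℝ) := Nat.cast_nonneg n
          linarith)) r) hnum hdenpos hden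
    _ = 2 ^ a * phiH r a n := by
        rw [phiH, div_div_eq_mul_div, mul_comm, mul_div_assoc]

lemma normalizeH (m r : ℕ) (h : ℕ → ℝ) (C : ℝ)
    (hd : ∀ n : ℕ, 2 ≤ n → |h n| ≤ C * (Real.log n) ^ r / (n : ℝ) ^ (((m : ℝ) + 3) / 2)) :
    ∃ D : ℝ, 0 ≤ D ∧ ∀ n : ℕ, |h n| ≤ D * phiH r (((m : ℝ) + 3) / 2) n := by
  set a : ℝ := ((m : ℝ) + 3) / 2 with hadef
  have ha0 : (0:ℝ) ≤ a := by positivity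
  refine ⟨max (max (|h 0| / phiH r a 0) (|h 1| / phiH r a 1)) (|C| * 2 ^ a), ?_, ?_⟩
  · exact le_trans (div_nonneg (abs_nonneg _) (phiH_pos r a 0).le)
      (le_trans (le_max_left _ _) (le_max_left _ _))
  intro n
  match n, (by omega : n = 0 ∨ n = 1 ∨ 2 ≤ n) with
  | _, Or.inl rfl =>
    calc |h 0| = (|h 0| / phiH r a 0) * phiH r a 0 :=
          (div_mul_cancel₀ _ (phiH_pos r a 0).ne').symm
      _ ≤ _ := by
          apply mul_le_mul_of_nonneg_right _ (phiH_pos r a 0).le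
          exact le_trans (le_max_left _ _) (le_max_left _ _)
  | _, Or.inr (Or.inl rfl) =>
    calc |h 1| = (|h 1| / phiH r a 1) * phiH r a 1 :=
          (div_mul_cancel₀ _ (phiH_pos r a 1).ne').symm
      _ ≤ _ := by
          apply mul_le_mul_of_nonneg_right _ (phiH_pos r a 1).le
          exact le_trans (le_max_right _ _) (le_max_left _ _)
  | n, Or.inr (Or.inr hn) =>
    have hn1 : (1:ℝ) ≤ (n:ℝ) := by exact_mod_cast Nat.one_le_of_lt hn
    have hnpos : (0:ℝ) < (n:ℝ) := by linarith
    have hlognn : 0 ≤ Real.log (n:ℝ) := Real.log_nonneg hn1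
    have step1 : C * (Real.log n) ^ r / (n : ℝ) ^ a ≤
        |C| * (Real.log ((n:ℝ) + 2)) ^ r / (n : ℝ) ^ a := by
      apply div_le_div_of_nonneg_right _ (Real.rpow_pos_of_pos hnpos a).le
      calc C * (Real.log n) ^ r ≤ |C| * (Real.log n) ^ r := by
            apply mul_le_mul_of_nonneg_right (le_abs_self C) (pow_nonneg hlognn r)
        _ ≤ |C| * (Real.log ((n:ℝ) + 2)) ^ r := by
            apply mul_le_mul_of_nonneg_left _ (abs_nonneg C)
            apply pow_le_pow_left₀ hlognn
            apply Real.log_le_log hnpos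
            linarith
    have step2 : ((n:ℝ) + 1) ^ a / 2 ^ a ≤ (n:ℝ) ^ a := by
      calc ((n:ℝ) + 1) ^ a / 2 ^ a = (((n:ℝ) + 1) / 2) ^ a :=
            (Real.div_rpow (by positivity) (by norm_num : (0:ℝ) ≤ 2) a).symm
        _ ≤ (n:ℝ) ^ a := Real.rpow_le_rpow (by positivity) (by linarith) ha0
    have step3 : |C| * (Real.log ((n:ℝ) + 2)) ^ r / (n : ℝ) ^ a ≤
        |C| * 2 ^ a * phiH r a n := by
      have hln2 : 0 ≤ (Real.log ((n:ℝ) + 2)) ^ r :=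
        pow_nonneg (Real.log_nonneg (by linarith)) r
      calc |C| * (Real.log ((n:ℝ) + 2)) ^ r / (n : ℝ) ^ a
          ≤ |C| * (Real.log ((n:ℝ) + 2)) ^ r / (((n:ℝ) + 1) ^ a / 2 ^ a) := by
            apply div_le_div₀ (mul_nonneg (abs_nonneg C) hln2) le_rfl _ step2
            apply div_pos (Real.rpow_pos_of_pos (by positivity) a)
              (Real.rpow_pos_of_pos (by norm_num) a)
        _ = |C| * 2 ^ a * phiH r a n := by
            rw [phiH]; field_simp
    calc |h n| ≤ C * (Real.log n) ^ r / (n : ℝ) ^ a := hd n hn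
      _ ≤ |C| * (Real.log ((n:ℝ) + 2)) ^ r / (n : ℝ) ^ a := step1
      _ ≤ |C| * 2 ^ a * phiH r a n := step3
      _ ≤ _ := by
          apply mul_le_mul_of_nonneg_right _ (phiH_pos r a n).le
          exact le_max_right _ _

lemma polyBoundH (Q : Polynomial ℝ) : ∃ CQ : ℝ, 0 ≤ CQ ∧ ∀ n : ℕ,
    |Q.eval (n : ℝ)| ≤ CQ * ((n : ℝ) + 1) ^ (Q.natDegree : ℝ) := by
  refine ⟨∑ i ∈ Finset.range (Q.natDegree + 1), |Q.coeff i|, ?_, ?_⟩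
  · exact Finset.sum_nonneg fun i _ => abs_nonneg _
  intro n
  have h1 : (1:ℝ) ≤ (n:ℝ) + 1 := by
    have : (0:ℝ) ≤ (n:ℝ) := Nat.cast_nonneg n
    linarith
  rw [Polynomial.eval_eq_sum_range]
  calc |∑ i ∈ Finset.range (Q.natDegree + 1), Q.coeff i * (n:ℝ) ^ i|
      ≤ ∑ i ∈ Finset.range (Q.natDegree + 1), |Q.coeff i * (n:ℝ) ^ i| :=
        Finset.abs_sum_le_sum_abs _ _
    _ ≤ ∑ i ∈ Finset.range (Q.natDegree + 1), |Q.coeff i| * ((n:ℝ) + 1) ^ (Q.natDegree : ℝ) := by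
        apply Finset.sum_le_sum
        intro i hi
        rw [abs_mul, abs_pow, abs_of_nonneg (Nat.cast_nonneg (α := ℝ) n)]
        apply mul_le_mul_of_nonneg_left _ (abs_nonneg _)
        calc (n:ℝ) ^ i ≤ ((n:ℝ) + 1) ^ i := by
              apply pow_le_pow_left₀ (Nat.cast_nonneg n)
              linarith
          _ ≤ ((n:ℝ) + 1) ^ Q.natDegree := by
              exact pow_le_pow_right₀ h1 (Nat.lt_succ_iff.mp (Finset.mem_range.mp hi))
          _ = ((n:ℝ) + 1) ^ (Q.natDegree : ℝ) := (Real.rpow_natCast _ _).symm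
    _ = _ := by rw [← Finset.sum_mul]

lemma summableMulPolyH (m r : ℕ) (h : ℕ → ℝ) (D : ℝ)
    (hD : ∀ n : ℕ, |h n| ≤ D * phiH r (((m : ℝ) + 3) / 2) n)
    (Q : Polynomial ℝ) (hQ : 2 * Q.natDegree ≤ m) :
    Summable (fun n : ℕ => ‖h n * Q.eval (n : ℝ)‖) := by
  set a : ℝ := ((m : ℝ) + 3) / 2 with hadef
  obtain ⟨CQ, hCQ0, hCQ⟩ := polyBoundH Q
  have hgt : 1 < a - (Q.natDegree : ℝ) := by
    have : (Q.natDegree : ℝ) ≤ (m : ℝ) / 2 := by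
      have : ((2 * Q.natDegree : ℕ) : ℝ) ≤ (m : ℝ) := Nat.cast_le.mpr hQ
      push_cast at this
      linarith
    rw [hadef]; linarith
  refine Summable.of_nonneg_of_le (fun n => norm_nonneg _) (fun n => ?_)
    (((summable_phiH r hgt).mul_left (D * CQ)))
  · 
    have hy : (0:ℝ) < (n:ℝ) + 1 := by positivity
    have hDphi : 0 ≤ D * phiH r a n := le_trans (abs_nonneg _) (hD n)
    calc ‖h n * Q.eval (n:ℝ)‖ = |h n| * |Q.eval (n:ℝ)| := abs_mul _ _
      _ ≤ (D * phiH r a n) * (CQ * ((n:ℝ) + 1) ^ (Q.natDegree : ℝ)) :=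
          mul_le_mul (hD n) (hCQ n) (abs_nonneg _) hDphi
      _ = (D * CQ) * (phiH r a n * ((n:ℝ) + 1) ^ (Q.natDegree : ℝ)) := by ring
      _ = (D * CQ) * phiH r (a - (Q.natDegree : ℝ)) n := by
          rw [phiH, phiH, Real.rpow_sub hy]
          field_simp

lemma taylorExpandH (P : Polynomial ℝ) (x y : ℝ) :
    P.eval (x + y) = ∑ i ∈ Finset.range (P.natDegree + 1),
      ((Polynomial.hasseDeriv i P).eval y) * x ^ i := by
  have h := Polynomial.eval_eq_sum_range (p := Polynomial.taylor y P) x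
  rw [Polynomial.taylor_eval] at h
  rw [h, Polynomial.natDegree_taylor]
  exact Finset.sum_congr rfl fun i _ => by rw [Polynomial.taylor_coeff]


/-- The class `H_m^r` is closed under convolution (multiplication of generating
functions): both the coefficient decay and orthogonality to polynomials of
degree `≤ ⌊m/2⌋` are preserved. -/
theorem stmt_8 (m r : ℕ) (h g : ℕ → ℝ)
    (hhdec : ∃ C : ℝ, ∀ n : ℕ, 2 ≤ n →
      |h n| ≤ C * (Real.log n) ^ r / (n : ℝ) ^ (((m : ℝ) + 3) / 2))
    (hgdec : ∃ C : ℝ, ∀ n : ℕ, 2 ≤ n →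
      |g n| ≤ C * (Real.log n) ^ r / (n : ℝ) ^ (((m : ℝ) + 3) / 2))
    (hhorth : ∀ P : Polynomial ℝ, 2 * P.natDegree ≤ m →
      HasSum (fun n : ℕ => h n * P.eval (n : ℝ)) 0)
    (hgorth : ∀ P : Polynomial ℝ, 2 * P.natDegree ≤ m →
      HasSum (fun n : ℕ => g n * P.eval (n : ℝ)) 0) :
    (∃ C : ℝ, ∀ n : ℕ, 2 ≤ n →
      |∑ k ∈ Finset.range (n + 1), h k * g (n - k)|
        ≤ C * (Real.log n) ^ r / (n : ℝ) ^ (((m : ℝ) + 3) / 2)) ∧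
    (∀ P : Polynomial ℝ, 2 * P.natDegree ≤ m →
      HasSum (fun n : ℕ => (∑ k ∈ Finset.range (n + 1), h k * g (n - k)) * P.eval (n : ℝ)) 0) := by
  set a : ℝ := ((m : ℝ) + 3) / 2 with hadef
  have ha0 : (0:ℝ) ≤ a := by positivity
  have ha1 : (1:ℝ) < a := by
    rw [hadef]
    have : (0:ℝ) ≤ (m:ℝ) := Nat.cast_nonneg m
    linarith
  obtain ⟨Ch, hCh⟩ := hhdec
  obtain ⟨Cg, hCg⟩ := hgdec
  obtain ⟨Dh, hDh0, hDh⟩ := normalizeH m r h Ch hCh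
  obtain ⟨Dg, hDg0, hDg⟩ := normalizeH m r g Cg hCg
  constructor
  · -- decay part
    set S : ℝ := ∑' n, phiH r a n with hSdef
    have hSsum : Summable (phiH r a) := summable_phiH r ha1
    have hS0 : 0 ≤ S := tsum_nonneg fun n => (phiH_pos r a n).le
    refine ⟨Dh * Dg * 2 ^ a * (2 * S) * 2 ^ r, ?_⟩
    intro n hn
    have hn1 : (1:ℝ) ≤ (n:ℝ) := by exact_mod_cast Nat.one_le_of_lt hn
    have hnpos : (0:ℝ) < (n:ℝ) := by linarith
    -- pointwise bound on convolution terms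
    have pointwise : ∀ k ∈ Finset.range (n + 1),
        phiH r a k * phiH r a (n - k) ≤
          2 ^ a * phiH r a n * (phiH r a k + phiH r a (n - k)) := by
      intro k hk
      have hkn : k ≤ n := Nat.lt_succ_iff.mp (Finset.mem_range.mp hk)
      rcases le_or_gt n (2 * k) with hcase | hcase
      · have hhalf : phiH r a k ≤ 2 ^ a * phiH r a n := phiH_half ha0 hkn hcase
        calc phiH r a k * phiH r a (n - k)
            ≤ (2 ^ a * phiH r a n) * phiH r a (n - k) :=
              mul_le_mul_of_nonneg_right hhalf (phiH_pos r a _).le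
          _ ≤ 2 ^ a * phiH r a n * (phiH r a k + phiH r a (n - k)) := by
              apply mul_le_mul_of_nonneg_left _
                (mul_nonneg (Real.rpow_nonneg (by norm_num) a) (phiH_pos r a n).le)
              linarith [(phiH_pos r a k).le]
      · have hle : n - k ≤ n := Nat.sub_le n k
        have h2 : n ≤ 2 * (n - k) := by omega
        have hhalf : phiH r a (n - k) ≤ 2 ^ a * phiH r a n := phiH_half ha0 hle h2
        calc phiH r a k * phiH r a (n - k)
            ≤ phiH r a k * (2 ^ a * phiH r a n) :=
              mul_le_mul_of_nonneg_left hhalf (phiH_pos r a _).le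
          _ ≤ 2 ^ a * phiH r a n * (phiH r a k + phiH r a (n - k)) := by
              rw [mul_comm (phiH r a k)]
              apply mul_le_mul_of_nonneg_left _
                (mul_nonneg (Real.rpow_nonneg (by norm_num) a) (phiH_pos r a n).le)
              linarith [(phiH_pos r a (n - k)).le]
    have sumrefl : ∑ k ∈ Finset.range (n + 1), phiH r a (n - k)
        = ∑ k ∈ Finset.range (n + 1), phiH r a k := by
      have := Finset.sum_range_reflect (fun j => phiH r a j) (n + 1)
      simpa using this
    have sumphile : ∑ k ∈ Finset.range (n + 1), phiH r a k ≤ S :=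
      Summable.sum_le_tsum _ (fun i _ => (phiH_pos r a i).le) hSsum
    have main : |∑ k ∈ Finset.range (n + 1), h k * g (n - k)| ≤
        Dh * Dg * 2 ^ a * (2 * S) * phiH r a n := by
      calc |∑ k ∈ Finset.range (n + 1), h k * g (n - k)|
          ≤ ∑ k ∈ Finset.range (n + 1), |h k * g (n - k)| :=
            Finset.abs_sum_le_sum_abs _ _
        _ ≤ ∑ k ∈ Finset.range (n + 1), (Dh * phiH r a k) * (Dg * phiH r a (n - k)) := by
            apply Finset.sum_le_sum
            intro k _
            rw [abs_mul]
            exact mul_le_mul (hDh k) (hDg (n - k)) (abs_nonneg _)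
              (le_trans (abs_nonneg _) (hDh k))
        _ = (Dh * Dg) * ∑ k ∈ Finset.range (n + 1), phiH r a k * phiH r a (n - k) := by
            rw [Finset.mul_sum]; exact Finset.sum_congr rfl fun k _ => by ring
        _ ≤ (Dh * Dg) * ∑ k ∈ Finset.range (n + 1),
              2 ^ a * phiH r a n * (phiH r a k + phiH r a (n - k)) := by
            apply mul_le_mul_of_nonneg_left _ (mul_nonneg hDh0 hDg0)
            exact Finset.sum_le_sum pointwise
        _ = (Dh * Dg) * (2 ^ a * phiH r a n *
              (∑ k ∈ Finset.range (n + 1), phiH r a k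
                + ∑ k ∈ Finset.range (n + 1), phiH r a (n - k))) := by
            rw [← Finset.mul_sum, Finset.sum_add_distrib]
        _ = (Dh * Dg) * (2 ^ a * phiH r a n *
              (2 * ∑ k ∈ Finset.range (n + 1), phiH r a k)) := by
            rw [sumrefl]; ring
        _ ≤ (Dh * Dg) * (2 ^ a * phiH r a n * (2 * S)) := by
            apply mul_le_mul_of_nonneg_left _ (mul_nonneg hDh0 hDg0)
            apply mul_le_mul_of_nonneg_left _
              (mul_nonneg (Real.rpow_nonneg (by norm_num) a) (phiH_pos r a n).le)
            linarith
        _ = Dh * Dg * 2 ^ a * (2 * S) * phiH r a n := by ring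
    have phin : phiH r a n ≤ 2 ^ r * ((Real.log n) ^ r / (n : ℝ) ^ a) := by
      have hlog2 : Real.log ((n:ℝ) + 2) ≤ 2 * Real.log (n:ℝ) := by
        have hsq : (n:ℝ) + 2 ≤ (n:ℝ) ^ 2 := by
          have h2n : (2:ℝ) ≤ (n:ℝ) := by exact_mod_cast hn
          nlinarith
        calc Real.log ((n:ℝ) + 2) ≤ Real.log ((n:ℝ) ^ 2) :=
              Real.log_le_log (by positivity) hsq
          _ = 2 * Real.log (n:ℝ) := by
              rw [Real.log_pow]; push_cast; ring
      have hlognn : 0 ≤ Real.log ((n:ℝ) + 2) := Real.log_nonneg (by linarith)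
      have hnum : (Real.log ((n:ℝ) + 2)) ^ r ≤ 2 ^ r * (Real.log (n:ℝ)) ^ r := by
        calc (Real.log ((n:ℝ) + 2)) ^ r ≤ (2 * Real.log (n:ℝ)) ^ r :=
              pow_le_pow_left₀ hlognn hlog2 r
          _ = 2 ^ r * (Real.log (n:ℝ)) ^ r := mul_pow _ _ _
      have hden : (n:ℝ) ^ a ≤ ((n:ℝ) + 1) ^ a :=
        Real.rpow_le_rpow hnpos.le (by linarith) ha0
      calc phiH r a n = (Real.log ((n:ℝ) + 2)) ^ r / ((n:ℝ) + 1) ^ a := rfl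
        _ ≤ (2 ^ r * (Real.log (n:ℝ)) ^ r) / (n:ℝ) ^ a :=
            div_le_div₀ (by positivity) hnum (Real.rpow_pos_of_pos hnpos a) hden
        _ = 2 ^ r * ((Real.log n) ^ r / (n : ℝ) ^ a) := by ring
    calc |∑ k ∈ Finset.range (n + 1), h k * g (n - k)|
        ≤ Dh * Dg * 2 ^ a * (2 * S) * phiH r a n := main
      _ ≤ Dh * Dg * 2 ^ a * (2 * S) * (2 ^ r * ((Real.log n) ^ r / (n : ℝ) ^ a)) := by
          apply mul_le_mul_of_nonneg_left phin (by positivity)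
      _ = Dh * Dg * 2 ^ a * (2 * S) * 2 ^ r * (Real.log n) ^ r / (n : ℝ) ^ a := by
          ring
  · -- orthogonality part
    intro P hP
    set d : ℕ := P.natDegree with hddef
    have key : ∀ i ∈ Finset.range (d + 1),
        HasSum (fun n : ℕ => ∑ k ∈ Finset.range (n + 1),
          (h k * (k : ℝ) ^ i) * (g (n - k) * (Polynomial.hasseDeriv i P).eval ((n - k : ℕ) : ℝ)))
          0 := by
      intro i hi
      have hid : i ≤ d := Nat.lt_succ_iff.mp (Finset.mem_range.mp hi)
      have hXi : 2 * (Polynomial.X ^ i : Polynomial ℝ).natDegree ≤ m := by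
        rw [Polynomial.natDegree_X_pow]; omega
      have hHi : 2 * (Polynomial.hasseDeriv i P).natDegree ≤ m := by
        have := Polynomial.natDegree_hasseDeriv_le P i
        omega
      have hsa : HasSum (fun k : ℕ => h k * (k : ℝ) ^ i) 0 := by
        have := hhorth (Polynomial.X ^ i) hXi
        simpa using this
      have hsb : HasSum (fun j : ℕ => g j * (Polynomial.hasseDeriv i P).eval (j : ℝ)) 0 :=
        hgorth _ hHi
      have sna : Summable (fun k : ℕ => ‖h k * (k : ℝ) ^ i‖) := by
        have := summableMulPolyH m r h Dh hDh (Polynomial.X ^ i) hXi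
        simpa using this
      have snb : Summable (fun j : ℕ =>
          ‖g j * (Polynomial.hasseDeriv i P).eval (j : ℝ)‖) :=
        summableMulPolyH m r g Dg hDg _ hHi
      have := hasSum_sum_range_mul_of_summable_norm sna snb
      rwa [hsa.tsum_eq, hsb.tsum_eq, zero_mul] at this
    have total : HasSum (fun n : ℕ => ∑ i ∈ Finset.range (d + 1),
        ∑ k ∈ Finset.range (n + 1),
          (h k * (k : ℝ) ^ i) * (g (n - k) * (Polynomial.hasseDeriv i P).eval ((n - k : ℕ) : ℝ)))
        0 := by
      have := hasSum_sum key
      rwa [Finset.sum_const_zero] at this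
    have eqfun : (fun n : ℕ => (∑ k ∈ Finset.range (n + 1), h k * g (n - k)) * P.eval (n : ℝ))
        = fun n : ℕ => ∑ i ∈ Finset.range (d + 1), ∑ k ∈ Finset.range (n + 1),
            (h k * (k : ℝ) ^ i) * (g (n - k) * (Polynomial.hasseDeriv i P).eval ((n - k : ℕ) : ℝ)) := by
      funext n
      rw [Finset.sum_mul, Finset.sum_comm]
      apply Finset.sum_congr rfl
      intro k hk
      have hkn : k ≤ n := Nat.lt_succ_iff.mp (Finset.mem_range.mp hk)
      have hcast : ((k : ℝ) + ((n - k : ℕ) : ℝ)) = (n : ℝ) := by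
        rw [← Nat.cast_add, Nat.add_sub_cancel' hkn]
      have hT := taylorExpandH P (k : ℝ) ((n - k : ℕ) : ℝ)
      rw [hcast] at hT
      rw [hT, Finset.mul_sum]
      exact Finset.sum_congr rfl fun i _ => by ring
    rw [eqfun]
    exact total
end

section
/- Let m ≥ 1 and H(s) = ∑_{n≥0} h_n s^n with (n+1)h_{n+1} = O((log n)^r / n^{(m+1)/2}) (i.e. the derivative's coefficients decay at rate of class H_{m-2}^r), the derivative coefficient sequence ((n+1)h_{n+1}) orthogonal to all polynomials of degree ≤ ⌊(m-2)/2⌋, and lim_{s→1⁻} H(s) = 0. Then h_n = O((log n)^r / n^{(m+3)/2}) and ∑_{n≥0} h_n P(n) = 0 for every polynomial P of degree ≤ ⌊m/2⌋. -/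
open Real Filter Polynomial Set

lemma aux_sum_log (r : ℕ) (a : ℝ) (ha : 1 < a) :
    Summable (fun n : ℕ => Real.log n ^ r / (n : ℝ) ^ a) := by
  set ε : ℝ := (a - 1) / (2 * (r + 1)) with hεdef
  have hεpos : 0 < ε := by
    apply div_pos (by linarith) (by positivity)
  have hexp : ε * r - a < -1 := by
    have h1 : ε * r ≤ (a - 1) / 2 := by
      rw [hεdef, div_mul_eq_mul_div, div_le_div_iff₀ (by positivity) (by norm_num)]
      nlinarith [hεpos]
    linarith
  have hsum : Summable (fun n : ℕ => (1 / ε ^ r) * (n : ℝ) ^ (ε * r - a)) :=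
    (Real.summable_nat_rpow.mpr hexp).mul_left _
  refine Summable.of_nonneg_of_le (fun n => by positivity) (fun n => ?_) hsum
  rcases Nat.eq_zero_or_pos n with rfl | hn
  · simp [Real.zero_rpow (by linarith : (ε * r - a) ≠ 0),
      Real.zero_rpow (by linarith : a ≠ 0)]
  have hn1 : (1 : ℝ) ≤ n := by exact_mod_cast hn
  have hlog : Real.log n ≤ (n : ℝ) ^ ε / ε := Real.log_le_rpow_div (by positivity) hεpos
  have hlr : Real.log n ^ r ≤ ((n : ℝ) ^ ε / ε) ^ r :=
    pow_le_pow_left₀ (Real.log_natCast_nonneg n) hlog r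
  have h2 : ((n : ℝ) ^ ε / ε) ^ r / (n : ℝ) ^ a = (1 / ε ^ r) * (n : ℝ) ^ (ε * r - a) := by
    rw [div_pow, ← Real.rpow_natCast ((n:ℝ) ^ ε) r, ← Real.rpow_mul (by positivity),
      Real.rpow_sub (by positivity)]
    ring
  rw [← h2]
  exact div_le_div_of_nonneg_right hlr (by positivity)

lemma aux_decay (m r : ℕ) (C : ℝ) (h : ℕ → ℝ)
    (hC : ∀ n : ℕ, 2 ≤ n →
      |((n : ℝ) + 1) * h (n + 1)| ≤ C * (Real.log n) ^ r / (n : ℝ) ^ (((m : ℝ) + 1) / 2)) :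
    ∃ C' : ℝ, ∀ n : ℕ, 2 ≤ n →
      |h n| ≤ C' * (Real.log n) ^ r / (n : ℝ) ^ (((m : ℝ) + 3) / 2) := by
  set e1 : ℝ := ((m : ℝ) + 1) / 2 with he1
  set e2 : ℝ := ((m : ℝ) + 3) / 2 with he2
  have he1nn : 0 ≤ e1 := by positivity
  have hL : 0 < Real.log 2 ^ r := pow_pos (Real.log_pos (by norm_num)) r
  have hC0 : 0 ≤ C := by
    have h2 := (abs_nonneg _).trans (hC 2 le_rfl)
    push_cast at h2
    by_contra hneg
    push_neg at hneg
    have : C * Real.log 2 ^ r / (2 : ℝ) ^ e1 < 0 :=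
      div_neg_of_neg_of_pos (mul_neg_of_neg_of_pos hneg hL) (by positivity)
    linarith
  refine ⟨max (C * 2 ^ e1) (|h 2| * 2 ^ e2 / Real.log 2 ^ r), fun n hn => ?_⟩
  set C' : ℝ := max (C * 2 ^ e1) (|h 2| * 2 ^ e2 / Real.log 2 ^ r) with hC'
  rcases eq_or_lt_of_le hn with hn2 | hn3
  · -- n = 2
    subst hn2  -- careful direction
    push_cast
    have key : |h 2| * 2 ^ e2 / Real.log 2 ^ r * Real.log 2 ^ r / (2 : ℝ) ^ e2 = |h 2| := by
      field_simp
    calc |h 2| = |h 2| * 2 ^ e2 / Real.log 2 ^ r * Real.log 2 ^ r / (2 : ℝ) ^ e2 := key.symm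
      _ ≤ C' * Real.log 2 ^ r / (2 : ℝ) ^ e2 := by
          gcongr
          exact le_max_right _ _
  · -- n ≥ 3
    obtain ⟨k, rfl⟩ : ∃ k, n = k + 1 := ⟨n - 1, by omega⟩
    have hk : 2 ≤ k := by omega
    have hKge : (2 : ℝ) ≤ (k : ℝ) := by exact_mod_cast hk
    have hKpos : (0 : ℝ) < k := by linarith
    have hNpos : (0 : ℝ) < (k : ℝ) + 1 := by linarith
    have hbound := hC k hk
    push_cast
    set K : ℝ := (k : ℝ)
    set N : ℝ := K + 1 with hN
    have habs : |(K + 1) * h (k + 1)| = N * |h (k + 1)| := by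
      rw [abs_mul, abs_of_pos hNpos]
    rw [habs] at hbound
    have step1 : |h (k + 1)| ≤ C * Real.log K ^ r / (K ^ e1 * N) := by
      rw [← div_div]
      rw [le_div_iff₀ hNpos, mul_comm]
      exact hbound
    have hlogle : Real.log K ^ r ≤ Real.log N ^ r := by
      apply pow_le_pow_left₀ (Real.log_nonneg (by linarith))
      exact Real.log_le_log (by linarith) (by linarith)
    have step2 : C * Real.log K ^ r / (K ^ e1 * N) ≤ C * Real.log N ^ r / (K ^ e1 * N) := by
      gcongr
    have hNe : N ^ e1 * N = N ^ e2 := by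
      have h1 : N ^ e1 * N ^ (1 : ℝ) = N ^ (e1 + 1) := (Real.rpow_add hNpos _ _).symm
      rw [Real.rpow_one] at h1
      rw [h1]
      congr 1
      rw [he1, he2]; ring
    have hle : N ^ e1 ≤ 2 ^ e1 * K ^ e1 := by
      have h2K : N ≤ 2 * K := by rw [hN]; linarith
      calc N ^ e1 ≤ (2 * K) ^ e1 := Real.rpow_le_rpow (by linarith) h2K he1nn
        _ = 2 ^ e1 * K ^ e1 := Real.mul_rpow (by norm_num) hKpos.le
    have step3 : C * Real.log N ^ r / (K ^ e1 * N) ≤ C * 2 ^ e1 * Real.log N ^ r / N ^ e2 := by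
      rw [div_le_div_iff₀ (by positivity) (by positivity), ← hNe]
      have hnn : 0 ≤ C * Real.log N ^ r * N := by
        have : 0 ≤ Real.log N := Real.log_nonneg (by linarith)
        positivity
      nlinarith [mul_le_mul_of_nonneg_left hle hnn]
    have hlogN : 0 ≤ Real.log N := Real.log_nonneg (by linarith)
    have step4 : C * 2 ^ e1 * Real.log N ^ r / N ^ e2 ≤ C' * Real.log N ^ r / N ^ e2 := by
      gcongr
      exact le_max_left _ _
    calc |h (k + 1)| ≤ _ := step1
      _ ≤ _ := step2
      _ ≤ _ := step3
      _ ≤ _ := step4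

/-- Half of the differentiation lemma: if `H' ∈ H_{m-2}^r` and `H(1⁻) = 0`,
then `H ∈ H_m^r`. -/
theorem stmt_11 (m r : ℕ) (hm : 1 ≤ m) (h : ℕ → ℝ)
    (hderdec : ∃ C : ℝ, ∀ n : ℕ, 2 ≤ n →
      |((n : ℝ) + 1) * h (n + 1)| ≤ C * (Real.log n) ^ r / (n : ℝ) ^ (((m : ℝ) + 1) / 2))
    (hderorth : ∀ P : Polynomial ℝ, 2 * (P.natDegree : ℤ) ≤ (m : ℤ) - 2 →
      HasSum (fun n : ℕ => ((n : ℝ) + 1) * h (n + 1) * P.eval (n : ℝ)) 0)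
    (hlim : Filter.Tendsto (fun s : ℝ => ∑' n : ℕ, h n * s ^ n)
      (nhdsWithin 1 (Set.Iio 1)) (nhds 0)) :
    (∃ C : ℝ, ∀ n : ℕ, 2 ≤ n →
      |h n| ≤ C * (Real.log n) ^ r / (n : ℝ) ^ (((m : ℝ) + 3) / 2)) ∧
    (∀ P : Polynomial ℝ, 2 * P.natDegree ≤ m →
      HasSum (fun n : ℕ => h n * P.eval (n : ℝ)) 0) := by
  obtain ⟨C₀, hC⟩ := hderdec
  obtain ⟨C', hC'⟩ := aux_decay m r C₀ h hC
  have hm1 : (1 : ℝ) ≤ m := by exact_mod_cast hm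
  have ha : (1 : ℝ) < ((m : ℝ) + 3) / 2 := by linarith
  -- summability of |h|
  have habs : Summable (fun n : ℕ => |h n|) := by
    rw [← summable_nat_add_iff 2]
    have hbase : Summable (fun n : ℕ =>
        C' * (Real.log (n + 2 : ℕ) ^ r / ((n + 2 : ℕ) : ℝ) ^ (((m : ℝ) + 3) / 2))) :=
      ((summable_nat_add_iff 2).mpr (aux_sum_log r _ ha)).mul_left C'
    refine Summable.of_nonneg_of_le (fun n => abs_nonneg _) (fun n => ?_) hbase
    rw [← mul_div_assoc]
    exact hC' (n + 2) (by omega)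
  have hsum : Summable h := by rwa [summable_abs_iff] at habs
  -- the limit identification
  have htend : Tendsto (fun s : ℝ => ∑' n : ℕ, h n * s ^ n)
      (nhdsWithin 1 (Set.Iio 1)) (nhds (∑' n : ℕ, h n)) := by
    apply tendsto_tsum_of_dominated_convergence habs
    · intro k
      have hc : Continuous fun s : ℝ => h k * s ^ k := by continuity
      have h2 : Tendsto (fun s : ℝ => h k * s ^ k) (nhdsWithin 1 (Set.Iio 1))
          (nhds (h k * 1 ^ k)) := (hc.tendsto 1).mono_left nhdsWithin_le_nhds
      simpa using h2
    · filter_upwards [Ioo_mem_nhdsLT_of_mem (show (1:ℝ) ∈ Set.Ioc 0 1 by norm_num)] with s hs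
      intro k
      rw [Real.norm_eq_abs, abs_mul, abs_pow]
      calc |h k| * |s| ^ k ≤ |h k| * 1 := by
            apply mul_le_mul_of_nonneg_left _ (abs_nonneg _)
            exact pow_le_one₀ (abs_nonneg s) (by rw [abs_of_pos hs.1]; exact hs.2.le)
        _ = |h k| := mul_one _
  have htsum : (∑' n : ℕ, h n) = 0 := tendsto_nhds_unique htend hlim
  have hhs0 : HasSum h 0 := htsum ▸ hsum.hasSum
  refine ⟨⟨C', hC'⟩, fun P hP => ?_⟩
  have key : ∀ c : ℝ, HasSum (fun n : ℕ => h n * c) 0 := fun c => by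
    simpa using hhs0.mul_right c
  set Q := P.divX with hQdef
  have main : HasSum (fun n : ℕ => h n * ((n : ℝ) * Q.eval (n : ℝ))) 0 := by
    by_cases hQ : Q = 0
    · simpa [hQ] using (hasSum_zero : HasSum (fun _ : ℕ => (0:ℝ)) 0)
    · have hdeg : 1 ≤ P.natDegree := by
        by_contra hd
        push_neg at hd
        interval_cases hPd : P.natDegree
        · exact hQ (divX_eq_zero_iff.mpr (by
            conv_lhs => rw [eq_C_of_natDegree_eq_zero hPd]))
      set Q1 := Q.comp (X + 1) with hQ1def
      have hQ1deg : 2 * (Q1.natDegree : ℤ) ≤ (m : ℤ) - 2 := by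
        have h1 : Q1.natDegree ≤ Q.natDegree * (X + 1 : ℝ[X]).natDegree := natDegree_comp_le
        have h2 : (X + 1 : ℝ[X]).natDegree = 1 := by
          rw [show (X + 1 : ℝ[X]) = X + C 1 by rw [Polynomial.C_1], natDegree_X_add_C]
        have h3 : Q.natDegree = P.natDegree - 1 := natDegree_divX_eq_natDegree_tsub_one
        rw [h2, mul_one, h3] at h1
        omega
      have horth := hderorth Q1 hQ1deg
      have heq : (fun n : ℕ => (fun k : ℕ => h k * ((k : ℝ) * Q.eval (k : ℝ))) (n + 1))
          = fun n : ℕ => ((n : ℝ) + 1) * h (n + 1) * Q1.eval (n : ℝ) := by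
        funext n
        simp only [hQ1def, eval_comp, eval_add, eval_X, eval_one]
        push_cast
        ring
      have hshift : HasSum (fun n : ℕ =>
          (fun k : ℕ => h k * ((k : ℝ) * Q.eval (k : ℝ))) (n + 1)) 0 := by
        rw [heq]; exact horth
      have := (hasSum_nat_add_iff (f := fun k : ℕ => h k * ((k : ℝ) * Q.eval (k : ℝ))) 1).mp hshift
      simpa using this
  have hev : ∀ x : ℝ, P.eval x = x * Q.eval x + P.coeff 0 := by
    intro x
    nth_rewrite 1 [← X_mul_divX_add P]
    simp only [eval_add, eval_mul, eval_X, eval_C, hQdef]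
  have hPeq : (fun n : ℕ => h n * P.eval (n : ℝ))
      = fun n : ℕ => h n * ((n : ℝ) * Q.eval (n : ℝ)) + h n * P.coeff 0 := by
    funext n
    rw [hev]
    ring
  rw [hPeq]
  simpa using main.add (key (P.coeff 0))
end
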